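/- arXiv:1307.5031 — 7 statements merged into one kernel-verified Lean document; each statement's English description precedes it below -/
import Mathlib

section
/- Let H₊ and H₋ be real Hilbert spaces and let V = H₊ × H₋ carry the Krein form g((x₊,x₋),(y₊,y₋)) = ⟨x₊,y₊⟩ − ⟨x₋,y₋⟩. A closed linear subspace L ⊆ V satisfies L = L^{⊥g} := {v ∈ V : g(v,w) = 0 for all w ∈ L} (i.e., L is hypermaximal neutral) if and only if there exists a surjective linear isometry T : H₊ → H₋ such that L = {(x, Tx) : x ∈ H₊}. -/
/-- In the real Krein space `Hp × Hm` with form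
`g((x₊,x₋),(y₊,y₋)) = ⟨x₊,y₊⟩ − ⟨x₋,y₋⟩`, a closed linear subspace `L` is hypermaximal
neutral (`L = L^{⊥g}`) if and only if it is the graph of a surjective linear isometry
`T : Hp → Hm`. -/
theorem stmt1 {Hp Hm : Type*}
    [NormedAddCommGroup Hp] [InnerProductSpace ℝ Hp] [CompleteSpace Hp]
    [NormedAddCommGroup Hm] [InnerProductSpace ℝ Hm] [CompleteSpace Hm]
    (g : Hp × Hm → Hp × Hm → ℝ)
    (hg : ∀ v w, g v w = (inner ℝ v.1 w.1 : ℝ) - (inner ℝ v.2 w.2 : ℝ))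
    (L : Submodule ℝ (Hp × Hm)) (hLclosed : IsClosed (L : Set (Hp × Hm))) :
    ((L : Set (Hp × Hm)) = {v : Hp × Hm | ∀ w ∈ L, g v w = 0}) ↔
    ∃ T : Hp →ₗᵢ[ℝ] Hm, Function.Surjective T ∧
      (L : Set (Hp × Hm)) = {p : Hp × Hm | p.2 = T p.1} := by
  constructor
  · intro hL
    -- membership characterization
    have hmemL : ∀ v : Hp × Hm, v ∈ L ↔ ∀ w ∈ L, g v w = 0 := by
      intro v
      constructor
      · intro hv
        have : v ∈ {v : Hp × Hm | ∀ w ∈ L, g v w = 0} := hL ▸ hv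
        exact this
      · intro hv
        have : v ∈ {v : Hp × Hm | ∀ w ∈ L, g v w = 0} := hv
        rw [← hL] at this
        exact this
    -- neutrality
    have hneut : ∀ v ∈ L, ‖v.1‖ = ‖v.2‖ := by
      intro v hv
      have h0 : g v v = 0 := (hmemL v).mp hv v hv
      rw [hg] at h0
      have h1 : ‖v.1‖ ^ 2 = ‖v.2‖ ^ 2 := by
        rw [← real_inner_self_eq_norm_sq, ← real_inner_self_eq_norm_sq]
        linarith
      have := congrArg Real.sqrt h1
      rwa [Real.sqrt_sq (norm_nonneg _), Real.sqrt_sq (norm_nonneg _)] at this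
    -- uniqueness of second component
    have hun : ∀ (x : Hp) (y₁ y₂ : Hm), (x, y₁) ∈ L → (x, y₂) ∈ L → y₁ = y₂ := by
      intro x y₁ y₂ h1 h2
      have hsub : ((x, y₁) - (x, y₂) : Hp × Hm) ∈ L := L.sub_mem h1 h2
      have := hneut _ hsub
      simp only [Prod.fst_sub, Prod.snd_sub, sub_self, norm_zero] at this
      have h3 : y₁ - y₂ = 0 := by
        rw [← norm_eq_zero]; exact this.symm
      exact sub_eq_zero.mp h3
    -- first projection image
    set S : Submodule ℝ Hp := L.map (LinearMap.fst ℝ Hp Hm) with hSdef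
    have hSmem : ∀ x : Hp, x ∈ S ↔ ∃ v ∈ L, v.1 = x := by
      intro x; simp [hSdef, Submodule.mem_map]
    have hSclosed : IsClosed (S : Set Hp) := by
      apply IsSeqClosed.isClosed
      intro u x hu hux
      choose v hvL hvfst using fun n => (hSmem (u n)).mp (hu n)
      have hkey : ∀ n m, dist ((v n).2) ((v m).2) = dist (u n) (u m) := by
        intro n m
        have hsub := hneut _ (L.sub_mem (hvL n) (hvL m))
        rw [dist_eq_norm, dist_eq_norm]
        simp only [Prod.fst_sub, Prod.snd_sub] at hsub
        rw [← hsub, hvfst, hvfst]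
      have hcu : CauchySeq u := hux.cauchySeq
      have hcz : CauchySeq (fun n => (v n).2) := by
        rw [Metric.cauchySeq_iff] at hcu ⊢
        intro ε hε
        obtain ⟨N, hN⟩ := hcu ε hε
        exact ⟨N, fun m hm n hn => by rw [hkey]; exact hN m hm n hn⟩
      obtain ⟨b, hb⟩ := cauchySeq_tendsto_of_complete hcz
      have hvt : Filter.Tendsto v Filter.atTop (nhds (x, b)) := by
        have : Filter.Tendsto (fun n => (u n, (v n).2)) Filter.atTop (nhds (x, b)) :=
          hux.prodMk_nhds hb
        convert this using 2 with n
        exact Prod.ext (hvfst n) rfl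
      have hxb : (x, b) ∈ L := hLclosed.mem_of_tendsto hvt (Filter.Eventually.of_forall hvL)
      exact (hSmem x).mpr ⟨(x, b), hxb, rfl⟩
    haveI : CompleteSpace S := hSclosed.completeSpace_coe
    have hStop : S = ⊤ := by
      rw [← Submodule.orthogonal_eq_bot_iff]
      rw [Submodule.eq_bot_iff]
      intro a ha
      have hmem : ((a, (0 : Hm)) : Hp × Hm) ∈ L := by
        rw [hmemL]
        intro w hw
        rw [hg]
        have hw1 : w.1 ∈ S := (hSmem w.1).mpr ⟨w, hw, rfl⟩
        have h0 : (inner ℝ w.1 a : ℝ) = 0 := (Submodule.mem_orthogonal S a).mp ha w.1 hw1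
        have h0' : (inner ℝ a w.1 : ℝ) = 0 := by rw [real_inner_comm]; exact h0
        simp [h0']
      have := hneut _ hmem
      simp only [norm_zero] at this
      exact norm_eq_zero.mp this
    have hex : ∀ x : Hp, ∃ y : Hm, (x, y) ∈ L := by
      intro x
      have hx : x ∈ S := hStop ▸ Submodule.mem_top
      obtain ⟨v, hv, hvx⟩ := (hSmem x).mp hx
      exact ⟨v.2, by rw [show (x, v.2) = v from Prod.ext hvx.symm rfl]; exact hv⟩
    set Tf : Hp → Hm := fun x => Classical.choose (hex x) with hTfdef
    have hTf : ∀ x : Hp, (x, Tf x) ∈ L := fun x => Classical.choose_spec (hex x)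
    have hadd : ∀ x y : Hp, Tf (x + y) = Tf x + Tf y := by
      intro x y
      have h1 : ((x + y, Tf x + Tf y) : Hp × Hm) ∈ L := by
        have := L.add_mem (hTf x) (hTf y)
        simpa using this
      exact hun _ _ _ (hTf (x + y)) h1
    have hsmul : ∀ (c : ℝ) (x : Hp), Tf (c • x) = c • Tf x := by
      intro c x
      have h1 : ((c • x, c • Tf x) : Hp × Hm) ∈ L := by
        have := L.smul_mem c (hTf x)
        simpa using this
      exact hun _ _ _ (hTf (c • x)) h1
    have hnorm : ∀ x : Hp, ‖Tf x‖ = ‖x‖ := fun x => (hneut _ (hTf x)).symm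
    set T : Hp →ₗᵢ[ℝ] Hm :=
      { toFun := Tf
        map_add' := hadd
        map_smul' := hsmul
        norm_map' := hnorm } with hTdef
    have hTcoe : ∀ x, T x = Tf x := fun _ => rfl
    -- every element of L is on the graph
    have hgraph : ∀ w : Hp × Hm, w ∈ L → w.2 = Tf w.1 := by
      intro w hw
      exact hun w.1 w.2 (Tf w.1) (by rwa [Prod.mk.eta]) (hTf w.1)
    -- surjectivity
    have hTsurj : Function.Surjective T := by
      have hrange : LinearMap.range T.toLinearMap = ⊤ := by
        have hRclosed : IsClosed ((LinearMap.range T.toLinearMap : Submodule ℝ Hm) : Set Hm) := by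
          have : IsClosed (Set.range Tf) := T.isometry.isClosedEmbedding.isClosed_range
          convert this using 1
          ext y; simp [hTcoe]
        haveI : CompleteSpace (LinearMap.range T.toLinearMap) := hRclosed.completeSpace_coe
        rw [← Submodule.orthogonal_eq_bot_iff, Submodule.eq_bot_iff]
        intro a ha
        have hmem : (((0 : Hp), a) : Hp × Hm) ∈ L := by
          rw [hmemL]
          intro w hw
          rw [hg]
          have hwR : w.2 ∈ LinearMap.range T.toLinearMap := ⟨w.1, (hgraph w hw).symm⟩
          have h0 : (inner ℝ w.2 a : ℝ) = 0 :=
            (Submodule.mem_orthogonal _ a).mp ha w.2 hwR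
          have h0' : (inner ℝ a w.2 : ℝ) = 0 := by rw [real_inner_comm]; exact h0
          simp [h0']
        have := hneut _ hmem
        simp only [norm_zero] at this
        exact norm_eq_zero.mp this.symm
      intro b
      have hb : b ∈ LinearMap.range T.toLinearMap := hrange ▸ Submodule.mem_top
      obtain ⟨x, hx⟩ := hb
      exact ⟨x, hx⟩
    refine ⟨T, hTsurj, ?_⟩
    ext w
    simp only [Set.mem_setOf_eq, SetLike.mem_coe]
    constructor
    · intro hw; exact hgraph w hw
    · intro hw
      have : w = (w.1, Tf w.1) := Prod.ext rfl hw
      rw [this]; exact hTf w.1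
  · rintro ⟨T, hTsurj, hLgraph⟩
    set e : Hp ≃ₗᵢ[ℝ] Hm := LinearIsometryEquiv.ofSurjective T hTsurj with hedef
    have hecoe : ∀ x, e x = T x := fun x => by
      rw [hedef, LinearIsometryEquiv.coe_ofSurjective]
    have hmemgraph : ∀ v : Hp × Hm, v ∈ L ↔ v.2 = T v.1 := by
      intro v
      constructor
      · intro hv
        have : v ∈ {p : Hp × Hm | p.2 = T p.1} := hLgraph ▸ hv
        exact this
      · intro hv
        have : v ∈ {p : Hp × Hm | p.2 = T p.1} := hv
        rw [← hLgraph] at this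
        exact this
    ext v
    simp only [Set.mem_setOf_eq, SetLike.mem_coe]
    constructor
    · intro hv w hw
      rw [hg, (hmemgraph v).mp hv, (hmemgraph w).mp hw, T.inner_map_map, sub_self]
    · intro hv
      rw [hmemgraph]
      have hkey : ∀ x : Hp, (inner ℝ v.1 x : ℝ) = inner ℝ v.2 (T x) := by
        intro x
        have hx : ((x, T x) : Hp × Hm) ∈ L := (hmemgraph (x, T x)).mpr rfl
        have := hv (x, T x) hx
        rw [hg] at this
        linarith
      have h1 : v.1 = e.symm v.2 := by
        have hz : ∀ x : Hp, (inner ℝ (v.1 - e.symm v.2) x : ℝ) = 0 := by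
          intro x
          rw [inner_sub_left]
          have h2 : (inner ℝ (e.symm v.2) x : ℝ) = inner ℝ v.2 (T x) := by
            calc (inner ℝ (e.symm v.2) x : ℝ) = inner ℝ (e (e.symm v.2)) (e x) := by
                  rw [e.inner_map_map]
              _ = inner ℝ v.2 (T x) := by rw [e.apply_symm_apply, hecoe]
          rw [hkey x, h2, sub_self]
        have := hz (v.1 - e.symm v.2)
        rw [inner_self_eq_zero] at this
        exact sub_eq_zero.mp this
      have : e v.1 = v.2 := by rw [h1, e.apply_symm_apply]
      rw [← hecoe]; exact this.symm
end

section
/- Let A = A₊ × A₋ and B = B₊ × B₋ be real Krein spaces (products of real Hilbert spaces with the indefinite forms g_A and g_B), and let V = A × B × B carry the form G((a,b,c),(a',b',c')) = g_A(a,a') + g_B(b,b') − g_B(c,c'), whose positive part is V₊ = A₊ × B₊ × B₋ and whose negative part is V₋ = A₋ × B₋ × B₊. Let L ⊆ V be a closed hypermaximal neutral subspace (L = L^{⊥G}), set L₁ := {a ∈ A : there exists t ∈ B with (a,t,t) ∈ L}, and assume L₁ is a closed hypermaximal neutral subspace of A (L₁ = L₁^{⊥g_A}). Let u : V → V and u₁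 : A → A be linear involutions (u∘u = id, u₁∘u₁ = id) such that u fixes L pointwise and maps V₊ into V₋ and V₋ into V₊, and u₁ fixes L₁ pointwise and maps A₊ × {0} into {0} × A₋ and {0} × A₋ into A₊ × {0}. Then for every φ ∈ A there exist φ', φ'' ∈ B such that u(φ, φ', φ'') = (u₁(φ), φ'', φ'). -/
lemma krein_graph_norm {Ap Am : Type*}
    [NormedAddCommGroup Ap] [InnerProductSpace ℝ Ap]
    [NormedAddCommGroup Am] [InnerProductSpace ℝ Am]
    (gA : Ap × Am → Ap × Am → ℝ)
    (hgA : ∀ a a', gA a a' = (inner ℝ a.1 a'.1 : ℝ) - (inner ℝ a.2 a'.2 : ℝ))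
    (L₁ : Submodule ℝ (Ap × Am))
    (hL₁hyp : (L₁ : Set (Ap × Am)) = {a : Ap × Am | ∀ a' ∈ L₁, gA a a' = 0}) :
    ∀ z ∈ L₁, ‖z.1‖ = ‖z.2‖ := by
  intro z hz
  have h0 : gA z z = 0 := by
    have := hL₁hyp ▸ (SetLike.mem_coe.mpr hz)
    exact this z hz
  rw [hgA] at h0
  have h1 : (inner ℝ z.1 z.1 : ℝ) = inner ℝ z.2 z.2 := by linarith
  rw [real_inner_self_eq_norm_sq, real_inner_self_eq_norm_sq] at h1
  exact (sq_eq_sq₀ (norm_nonneg _) (norm_nonneg _)).mp h1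

lemma krein_graph_surj_fst {Ap Am : Type*}
    [NormedAddCommGroup Ap] [InnerProductSpace ℝ Ap] [CompleteSpace Ap]
    [NormedAddCommGroup Am] [InnerProductSpace ℝ Am] [CompleteSpace Am]
    (gA : Ap × Am → Ap × Am → ℝ)
    (hgA : ∀ a a', gA a a' = (inner ℝ a.1 a'.1 : ℝ) - (inner ℝ a.2 a'.2 : ℝ))
    (L₁ : Submodule ℝ (Ap × Am))
    (hL₁closed : IsClosed (L₁ : Set (Ap × Am)))
    (hL₁hyp : (L₁ : Set (Ap × Am)) = {a : Ap × Am | ∀ a' ∈ L₁, gA a a' = 0}) :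
    ∀ x : Ap, ∃ y : Am, (x, y) ∈ L₁ := by
  have hnorm := krein_graph_norm gA hgA L₁ hL₁hyp
  set M : Submodule ℝ Ap := L₁.map (LinearMap.fst ℝ Ap Am) with hM
  haveI : CompleteSpace L₁ := hL₁closed.completeSpace_coe
  -- the projection restricted to L₁ is an isometry
  set f : L₁ →ₗ[ℝ] Ap := (LinearMap.fst ℝ Ap Am).comp L₁.subtype with hf
  have hiso : Isometry f := by
    apply AddMonoidHomClass.isometry_of_norm
    intro z
    have h1 : ‖(z : Ap × Am).1‖ = ‖(z : Ap × Am).2‖ := hnorm z z.2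
    have h2 : ‖(z : Ap × Am)‖ = max ‖(z : Ap × Am).1‖ ‖(z : Ap × Am).2‖ := rfl
    show ‖(z : Ap × Am).1‖ = ‖z‖
    rw [show ‖z‖ = ‖(z : Ap × Am)‖ from rfl, h2, ← h1, max_self]
  have hrange : Set.range f = (M : Set Ap) := by
    ext x
    constructor
    · rintro ⟨z, rfl⟩; exact ⟨z, z.2, rfl⟩
    · rintro ⟨z, hz, rfl⟩; exact ⟨⟨z, hz⟩, rfl⟩
  have hMclosed : IsClosed (M : Set Ap) := by
    rw [← hrange]; exact hiso.isClosedEmbedding.isClosed_range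
  haveI : CompleteSpace M := hMclosed.completeSpace_coe
  have horth : Mᗮ = ⊥ := by
    rw [Submodule.eq_bot_iff]
    intro x hx
    have hx0 : ((x, (0 : Am)) : Ap × Am) ∈ L₁ := by
      rw [← SetLike.mem_coe, hL₁hyp]
      intro z hz
      rw [hgA]
      have : (inner ℝ x z.1 : ℝ) = 0 := by
        have hz1 : z.1 ∈ M := ⟨z, hz, rfl⟩
        rw [real_inner_comm]
        exact (Submodule.mem_orthogonal M x).mp hx z.1 hz1
      simp [this]
    have hxM : x ∈ M := ⟨(x, 0), hx0, rfl⟩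
    have : (inner ℝ x x : ℝ) = 0 := (Submodule.mem_orthogonal M x).mp hx x hxM
    exact inner_self_eq_zero.mp this
  have hMtop : M = ⊤ := by
    have := Submodule.orthogonal_orthogonal M
    rw [horth, Submodule.bot_orthogonal_eq_top] at this
    exact this.symm
  intro x
  have hxM : x ∈ M := hMtop ▸ Submodule.mem_top
  obtain ⟨z, hz, hz1⟩ := hxM
  simp only [LinearMap.fst_apply] at hz1
  exact ⟨z.2, by rw [← hz1, Prod.mk.eta]; exact hz⟩

lemma krein_graph_surj_snd {Ap Am : Type*}
    [NormedAddCommGroup Ap] [InnerProductSpace ℝ Ap] [CompleteSpace Ap]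
    [NormedAddCommGroup Am] [InnerProductSpace ℝ Am] [CompleteSpace Am]
    (gA : Ap × Am → Ap × Am → ℝ)
    (hgA : ∀ a a', gA a a' = (inner ℝ a.1 a'.1 : ℝ) - (inner ℝ a.2 a'.2 : ℝ))
    (L₁ : Submodule ℝ (Ap × Am))
    (hL₁closed : IsClosed (L₁ : Set (Ap × Am)))
    (hL₁hyp : (L₁ : Set (Ap × Am)) = {a : Ap × Am | ∀ a' ∈ L₁, gA a a' = 0}) :
    ∀ y : Am, ∃ x : Ap, (x, y) ∈ L₁ := by
  have hnorm := krein_graph_norm gA hgA L₁ hL₁hyp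
  set M : Submodule ℝ Am := L₁.map (LinearMap.snd ℝ Ap Am) with hM
  haveI : CompleteSpace L₁ := hL₁closed.completeSpace_coe
  set f : L₁ →ₗ[ℝ] Am := (LinearMap.snd ℝ Ap Am).comp L₁.subtype with hf
  have hiso : Isometry f := by
    apply AddMonoidHomClass.isometry_of_norm
    intro z
    have h1 : ‖(z : Ap × Am).1‖ = ‖(z : Ap × Am).2‖ := hnorm z z.2
    have h2 : ‖(z : Ap × Am)‖ = max ‖(z : Ap × Am).1‖ ‖(z : Ap × Am).2‖ := rfl
    show ‖(z : Ap × Am).2‖ = ‖z‖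
    rw [show ‖z‖ = ‖(z : Ap × Am)‖ from rfl, h2, h1, max_self]
  have hrange : Set.range f = (M : Set Am) := by
    ext x
    constructor
    · rintro ⟨z, rfl⟩; exact ⟨z, z.2, rfl⟩
    · rintro ⟨z, hz, rfl⟩; exact ⟨⟨z, hz⟩, rfl⟩
  have hMclosed : IsClosed (M : Set Am) := by
    rw [← hrange]; exact hiso.isClosedEmbedding.isClosed_range
  haveI : CompleteSpace M := hMclosed.completeSpace_coe
  have horth : Mᗮ = ⊥ := by
    rw [Submodule.eq_bot_iff]
    intro x hx
    have hx0 : (((0 : Ap), x) : Ap × Am) ∈ L₁ := by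
      rw [← SetLike.mem_coe, hL₁hyp]
      intro z hz
      rw [hgA]
      have : (inner ℝ x z.2 : ℝ) = 0 := by
        have hz1 : z.2 ∈ M := ⟨z, hz, rfl⟩
        rw [real_inner_comm]
        exact (Submodule.mem_orthogonal M x).mp hx z.2 hz1
      simp [this]
    have hxM : x ∈ M := ⟨(0, x), hx0, rfl⟩
    have : (inner ℝ x x : ℝ) = 0 := (Submodule.mem_orthogonal M x).mp hx x hxM
    exact inner_self_eq_zero.mp this
  have hMtop : M = ⊤ := by
    have := Submodule.orthogonal_orthogonal M
    rw [horth, Submodule.bot_orthogonal_eq_top] at this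
    exact this.symm
  intro y
  have hxM : y ∈ M := hMtop ▸ Submodule.mem_top
  obtain ⟨z, hz, hz1⟩ := hxM
  simp only [LinearMap.snd_apply] at hz1
  exact ⟨z.1, by rw [← hz1, Prod.mk.eta]; exact hz⟩



/-- gluing lemma (paper's Lemma 5.1). In the Krein space
`V = A × B × B` with `A = Ap × Am`, `B = Bp × Bm` and form
`G = g_A ⊕ g_B ⊕ (−g_B)`, given a closed hypermaximal neutral subspace `L ⊆ V` whose
"glued" subspace `L₁ = {a | ∃ t, (a,t,t) ∈ L}` is closed hypermaximal neutral in `A`,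
and linear involutions `u`, `u₁` fixing `L` resp. `L₁` pointwise and interchanging the
positive and negative parts, for every `φ ∈ A` there are `φ', φ'' ∈ B` with
`u(φ, φ', φ'') = (u₁ φ, φ'', φ')`. -/
theorem stmt2 {Ap Am Bp Bm : Type*}
    [NormedAddCommGroup Ap] [InnerProductSpace ℝ Ap] [CompleteSpace Ap]
    [NormedAddCommGroup Am] [InnerProductSpace ℝ Am] [CompleteSpace Am]
    [NormedAddCommGroup Bp] [InnerProductSpace ℝ Bp] [CompleteSpace Bp]
    [NormedAddCommGroup Bm] [InnerProductSpace ℝ Bm] [CompleteSpace Bm]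
    (gA : Ap × Am → Ap × Am → ℝ)
    (hgA : ∀ a a', gA a a' = (inner ℝ a.1 a'.1 : ℝ) - (inner ℝ a.2 a'.2 : ℝ))
    (gB : Bp × Bm → Bp × Bm → ℝ)
    (hgB : ∀ b b', gB b b' = (inner ℝ b.1 b'.1 : ℝ) - (inner ℝ b.2 b'.2 : ℝ))
    (G : (Ap × Am) × (Bp × Bm) × (Bp × Bm) → (Ap × Am) × (Bp × Bm) × (Bp × Bm) → ℝ)
    (hG : ∀ v w, G v w = gA v.1 w.1 + gB v.2.1 w.2.1 - gB v.2.2 w.2.2)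
    (L : Submodule ℝ ((Ap × Am) × (Bp × Bm) × (Bp × Bm)))
    (hLclosed : IsClosed (L : Set ((Ap × Am) × (Bp × Bm) × (Bp × Bm))))
    (hLhyp : (L : Set ((Ap × Am) × (Bp × Bm) × (Bp × Bm))) =
      {v | ∀ w ∈ L, G v w = 0})
    (L₁ : Submodule ℝ (Ap × Am))
    (hL₁def : (L₁ : Set (Ap × Am)) = {a : Ap × Am | ∃ t : Bp × Bm, (a, t, t) ∈ L})
    (hL₁closed : IsClosed (L₁ : Set (Ap × Am)))
    (hL₁hyp : (L₁ : Set (Ap × Am)) = {a : Ap × Am | ∀ a' ∈ L₁, gA a a' = 0})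
    (u : ((Ap × Am) × (Bp × Bm) × (Bp × Bm)) →ₗ[ℝ] ((Ap × Am) × (Bp × Bm) × (Bp × Bm)))
    (huinv : ∀ v, u (u v) = v)
    (huL : ∀ z ∈ L, u z = z)
    -- u maps the positive part V₊ = Ap × Bp × Bm into the negative part V₋ = Am × Bm × Bp
    (hupm : ∀ v : (Ap × Am) × (Bp × Bm) × (Bp × Bm),
      v.1.2 = 0 → v.2.1.2 = 0 → v.2.2.1 = 0 →
      (u v).1.1 = 0 ∧ (u v).2.1.1 = 0 ∧ (u v).2.2.2 = 0)
    -- u maps the negative part V₋ into the positive part V₊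
    (humo : ∀ v : (Ap × Am) × (Bp × Bm) × (Bp × Bm),
      v.1.1 = 0 → v.2.1.1 = 0 → v.2.2.2 = 0 →
      (u v).1.2 = 0 ∧ (u v).2.1.2 = 0 ∧ (u v).2.2.1 = 0)
    (u₁ : (Ap × Am) →ₗ[ℝ] (Ap × Am))
    (hu₁inv : ∀ a, u₁ (u₁ a) = a)
    (hu₁L₁ : ∀ a ∈ L₁, u₁ a = a)
    (hu₁pm : ∀ a : Ap × Am, a.2 = 0 → (u₁ a).1 = 0)
    (hu₁mp : ∀ a : Ap × Am, a.1 = 0 → (u₁ a).2 = 0) :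
    ∀ φ : Ap × Am, ∃ φ' φ'' : Bp × Bm, u (φ, φ', φ'') = (u₁ φ, φ'', φ') := by
  -- key swap computation inside L
  have key : ∀ (a : Ap) (c : Am) (b : Bp × Bm), ((a, c), b, b) ∈ L →
      u ((a, 0), (b.1, 0), (0, b.2)) = ((0, c), (0, b.2), (b.1, 0)) ∧
      u ((0, c), (0, b.2), (b.1, 0)) = ((a, 0), (b.1, 0), (0, b.2)) := by
    intro a c b hb
    set x : (Ap × Am) × (Bp × Bm) × (Bp × Bm) := ((a, 0), (b.1, 0), (0, b.2)) with hx
    set y : (Ap × Am) × (Bp × Bm) × (Bp × Bm) := ((0, c), (0, b.2), (b.1, 0)) with hy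
    have hxy : x + y = ((a, c), b, b) := by
      simp [hx, hy, Prod.ext_iff]
    have e : u x + u y = ((a, c), b, b) := by
      rw [← map_add, hxy]; exact huL _ hb
    have hxm := hupm x (by simp [hx]) (by simp [hx]) (by simp [hx])
    have hyp := humo y (by simp [hy]) (by simp [hy]) (by simp [hy])
    have e11 : (u x).1.1 + (u y).1.1 = a := congrArg (fun v => v.1.1) e
    have e12 : (u x).1.2 + (u y).1.2 = c := congrArg (fun v => v.1.2) e
    have e211 : (u x).2.1.1 + (u y).2.1.1 = b.1 := congrArg (fun v => v.2.1.1) e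
    have e212 : (u x).2.1.2 + (u y).2.1.2 = b.2 := congrArg (fun v => v.2.1.2) e
    have e221 : (u x).2.2.1 + (u y).2.2.1 = b.1 := congrArg (fun v => v.2.2.1) e
    have e222 : (u x).2.2.2 + (u y).2.2.2 = b.2 := congrArg (fun v => v.2.2.2) e
    constructor
    · refine Prod.ext (Prod.ext ?_ ?_) (Prod.ext (Prod.ext ?_ ?_) (Prod.ext ?_ ?_))
      · exact hxm.1
      · rw [hyp.1] at e12; simpa using e12
      · exact hxm.2.1
      · rw [hyp.2.1] at e212; simpa using e212
      · rw [hyp.2.2] at e221; simpa using e221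
      · exact hxm.2.2
    · refine Prod.ext (Prod.ext ?_ ?_) (Prod.ext (Prod.ext ?_ ?_) (Prod.ext ?_ ?_))
      · rw [hxm.1] at e11; simpa using e11
      · exact hyp.1
      · rw [hxm.2.1] at e211; simpa using e211
      · exact hyp.2.1
      · exact hyp.2.2
      · rw [hxm.2.2] at e222; simpa using e222
  intro φ
  obtain ⟨ψ, hψ⟩ := krein_graph_surj_fst gA hgA L₁ hL₁closed hL₁hyp φ.1
  obtain ⟨χ, hχ⟩ := krein_graph_surj_snd gA hgA L₁ hL₁closed hL₁hyp φ.2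
  -- compute u₁ φ = (χ, ψ)
  have hu1a : u₁ (φ.1, 0) = (0, ψ) := by
    have hsplit : u₁ (φ.1, (0 : Am)) + u₁ ((0 : Ap), ψ) = (φ.1, ψ) := by
      rw [← map_add, show ((φ.1, (0 : Am)) + ((0 : Ap), ψ)) = (φ.1, ψ) by simp]
      exact hu₁L₁ _ hψ
    have h1 : (u₁ (φ.1, (0 : Am))).1 = 0 := hu₁pm _ rfl
    have h2 : (u₁ ((0 : Ap), ψ)).2 = 0 := hu₁mp _ rfl
    have c2 : (u₁ (φ.1, (0 : Am))).2 + (u₁ ((0 : Ap), ψ)).2 = ψ :=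
      congrArg Prod.snd hsplit
    rw [h2] at c2
    exact Prod.ext h1 (by simpa using c2)
  have hu1b : u₁ (0, φ.2) = (χ, 0) := by
    have hsplit : u₁ (χ, (0 : Am)) + u₁ ((0 : Ap), φ.2) = (χ, φ.2) := by
      rw [← map_add, show ((χ, (0 : Am)) + ((0 : Ap), φ.2)) = (χ, φ.2) by simp]
      exact hu₁L₁ _ hχ
    have h1 : (u₁ (χ, (0 : Am))).1 = 0 := hu₁pm _ rfl
    have h2 : (u₁ ((0 : Ap), φ.2)).2 = 0 := hu₁mp _ rfl
    have c1 : (u₁ (χ, (0 : Am))).1 + (u₁ ((0 : Ap), φ.2)).1 = χ :=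
      congrArg Prod.fst hsplit
    rw [h1] at c1
    exact Prod.ext (by simpa using c1) h2
  have hu1 : u₁ φ = (χ, ψ) := by
    have : u₁ ((φ.1, (0 : Am)) + ((0 : Ap), φ.2)) = (χ, ψ) := by
      rw [map_add, hu1a, hu1b]; simp
    rwa [show ((φ.1, (0 : Am)) + ((0 : Ap), φ.2)) = φ by simp] at this
  -- lift to L
  obtain ⟨t, ht⟩ : ∃ t : Bp × Bm, ((φ.1, ψ), t, t) ∈ L := by
    have : (φ.1, ψ) ∈ (L₁ : Set (Ap × Am)) := hψ
    rw [hL₁def] at this; exact this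
  obtain ⟨s, hs⟩ : ∃ t : Bp × Bm, ((χ, φ.2), t, t) ∈ L := by
    have : (χ, φ.2) ∈ (L₁ : Set (Ap × Am)) := hχ
    rw [hL₁def] at this; exact this
  have k1 := (key φ.1 ψ t ht).1
  have k2 := (key χ φ.2 s hs).2
  refine ⟨(t.1, s.2), (s.1, t.2), ?_⟩
  have hsplit : ((φ, ((t.1, s.2) : Bp × Bm), ((s.1, t.2) : Bp × Bm))
      : (Ap × Am) × (Bp × Bm) × (Bp × Bm))
      = ((φ.1, 0), (t.1, 0), (0, t.2)) + ((0, φ.2), (0, s.2), (s.1, 0)) := by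
    simp [Prod.ext_iff]
  rw [hsplit, map_add, k1, k2, hu1]
  simp [Prod.ext_iff]
end

section
/- In the setting of the preceding gluing lemma (real Krein spaces A = A₊ × A₋ and B = B₊ × B₋, V = A × B × B with form G = g_A ⊕ g_B ⊕ (−g_B), linear involutions u on V and u₁ on A as specified), assume that for every φ ∈ A there exist φ', φ'' ∈ B with u(φ, φ', φ'') = (u₁(φ), φ'', φ'). Then for every finite-dimensional subspace S₁ ⊆ A on which g_A is nondegenerate there exists a finite-dimensional subspace S ⊆ B on which g_B is nondegenerate such that for every φ ∈ S₁ there exist φ', φ'' ∈ S with u(φ, φ', φ'') = (u₁(φ), φ'', φ'). -/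
/-- (paper's Lemma 5.2) In the setting of the gluing lemma, if for every
`φ ∈ A` there are `φ', φ'' ∈ B` with `u(φ, φ', φ'') = (u₁ φ, φ'', φ')`, then for every
finite-dimensional subspace `S₁ ⊆ A` on which `g_A` is nondegenerate there is a
finite-dimensional subspace `S ⊆ B` on which `g_B` is nondegenerate such that for every
`φ ∈ S₁` the witnesses `φ', φ''` can be chosen in `S`. -/
theorem stmt3 {Ap Am Bp Bm : Type*}
    [NormedAddCommGroup Ap] [InnerProductSpace ℝ Ap] [CompleteSpace Ap]
    [NormedAddCommGroup Am] [InnerProductSpace ℝ Am] [CompleteSpace Am]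
    [NormedAddCommGroup Bp] [InnerProductSpace ℝ Bp] [CompleteSpace Bp]
    [NormedAddCommGroup Bm] [InnerProductSpace ℝ Bm] [CompleteSpace Bm]
    (gA : Ap × Am → Ap × Am → ℝ)
    (hgA : ∀ a a', gA a a' = (inner ℝ a.1 a'.1 : ℝ) - (inner ℝ a.2 a'.2 : ℝ))
    (gB : Bp × Bm → Bp × Bm → ℝ)
    (hgB : ∀ b b', gB b b' = (inner ℝ b.1 b'.1 : ℝ) - (inner ℝ b.2 b'.2 : ℝ))
    (G : (Ap × Am) × (Bp × Bm) × (Bp × Bm) → (Ap × Am) × (Bp × Bm) × (Bp × Bm) → ℝ)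
    (hG : ∀ v w, G v w = gA v.1 w.1 + gB v.2.1 w.2.1 - gB v.2.2 w.2.2)
    (u : ((Ap × Am) × (Bp × Bm) × (Bp × Bm)) →ₗ[ℝ] ((Ap × Am) × (Bp × Bm) × (Bp × Bm)))
    (huinv : ∀ v, u (u v) = v)
    (u₁ : (Ap × Am) →ₗ[ℝ] (Ap × Am))
    (hu₁inv : ∀ a, u₁ (u₁ a) = a)
    (hglue : ∀ φ : Ap × Am, ∃ φ' φ'' : Bp × Bm, u (φ, φ', φ'') = (u₁ φ, φ'', φ')) :
    ∀ S₁ : Submodule ℝ (Ap × Am), FiniteDimensional ℝ S₁ →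
      (∀ x ∈ S₁, (∀ y ∈ S₁, gA x y = 0) → x = 0) →
      ∃ S : Submodule ℝ (Bp × Bm), FiniteDimensional ℝ S ∧
        (∀ x ∈ S, (∀ y ∈ S, gB x y = 0) → x = 0) ∧
        ∀ φ ∈ S₁, ∃ φ' ∈ S, ∃ φ'' ∈ S, u (φ, φ', φ'') = (u₁ φ, φ'', φ') := by

  intro S₁ hfd hnd
  classical
  let b := Module.finBasis ℝ S₁
  choose f g hfg using fun i => hglue (b i : Ap × Am)
  let F : S₁ →ₗ[ℝ] Bp × Bm := b.constr ℝ f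
  let G' : S₁ →ₗ[ℝ] Bp × Bm := b.constr ℝ g
  have key : ∀ x : S₁, u ((x : Ap × Am), F x, G' x) = (u₁ x, G' x, F x) := by
    have hT : (u ∘ₗ LinearMap.prod S₁.subtype (LinearMap.prod F G'))
        = LinearMap.prod (u₁ ∘ₗ S₁.subtype) (LinearMap.prod G' F) := by
      apply b.ext
      intro i
      simp only [LinearMap.comp_apply, LinearMap.prod_apply, Pi.prod,
        Submodule.subtype_apply]
      show u ((b i : Ap × Am), F (b i), G' (b i)) = (u₁ (b i : Ap × Am), G' (b i), F (b i))
      rw [show F (b i) = f i from b.constr_basis ℝ f i,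
          show G' (b i) = g i from b.constr_basis ℝ g i]
      exact hfg i
    intro x
    have := congrArg (fun T => T x) hT
    simpa [LinearMap.prod_apply, Pi.prod] using this
  set S₀ : Submodule ℝ (Bp × Bm) := Submodule.span ℝ (Set.range f ∪ Set.range g) with hS₀
  have hFmem : ∀ x : S₁, F x ∈ S₀ := by
    intro x
    have : F x ∈ LinearMap.range F := LinearMap.mem_range_self _ _
    rw [show LinearMap.range F = Submodule.span ℝ (Set.range f) from b.constr_range ℝ] at this
    exact Submodule.span_mono Set.subset_union_left this
  have hGmem : ∀ x : S₁, G' x ∈ S₀ := by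
    intro x
    have : G' x ∈ LinearMap.range G' := LinearMap.mem_range_self _ _
    rw [show LinearMap.range G' = Submodule.span ℝ (Set.range g) from b.constr_range ℝ] at this
    exact Submodule.span_mono Set.subset_union_right this
  have hS₀fd : FiniteDimensional ℝ S₀ := by
    apply FiniteDimensional.span_of_finite
    exact (Set.finite_range f).union (Set.finite_range g)
  set S : Submodule ℝ (Bp × Bm) :=
    (S₀.map (LinearMap.fst ℝ Bp Bm)).prod (S₀.map (LinearMap.snd ℝ Bp Bm)) with hS
  refine ⟨S, ?_, ?_, ?_⟩
  · rw [hS, LinearMap.prod_eq_sup_map]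
    infer_instance
  · rintro ⟨x₁, x₂⟩ hx hx0
    have h1 : (x₁, (0 : Bm)) ∈ S := by
      refine Submodule.mem_prod.mpr ⟨?_, Submodule.zero_mem _⟩
      exact (Submodule.mem_prod.mp hx).1
    have h2 : ((0 : Bp), x₂) ∈ S := by
      refine Submodule.mem_prod.mpr ⟨Submodule.zero_mem _, ?_⟩
      exact (Submodule.mem_prod.mp hx).2
    have e1 := hx0 _ h1
    have e2 := hx0 _ h2
    rw [hgB] at e1 e2
    simp only [inner_zero_right] at e1 e2
    have hx1 : x₁ = 0 := by
      have : (inner ℝ x₁ x₁ : ℝ) = 0 := by linarith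
      exact inner_self_eq_zero.mp this
    have hx2 : x₂ = 0 := by
      have : (inner ℝ x₂ x₂ : ℝ) = 0 := by linarith
      exact inner_self_eq_zero.mp this
    simp [hx1, hx2]
  · intro φ hφ
    have hmem : ∀ y ∈ S₀, y ∈ S := by
      intro y hy
      exact Submodule.mem_prod.mpr ⟨Submodule.mem_map_of_mem hy, Submodule.mem_map_of_mem hy⟩
    exact ⟨F ⟨φ, hφ⟩, hmem _ (hFmem _), G' ⟨φ, hφ⟩, hmem _ (hGmem _), key ⟨φ, hφ⟩⟩
end

section
/- Let L₁ and L₂ be finite-dimensional real vector spaces with nondegenerate symmetric bilinear forms g₁ and g₂, and let L = L₁ × L₂ carry the direct-sum form g((η,ξ),(η',ξ')) = g₁(η,η') + g₂(ξ,ξ'). For an alternating m-form σ₁ on L₁ and an alternating n-form σ₂ on L₂ define the alternating (m+n)-form τ*(σ₁⊗σ₂) on L by τ*(σ₁⊗σ₂)((η₁,ξ₁),…,(η_{m+n},ξ_{m+n})) = (1/(m+n)!) Σ_{π ∈ S_{m+n}} sgn(π) σ₁(η_{π(1)},…,η_{π(m)}) σ₂(ξ_{π(m+1)},…,ξ_{π(m+n)}).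 Then for alternating m-forms σ₁, σ₁' on L₁ and alternating n-forms σ₂, σ₂' on L₂, the Fock pairings satisfy g_{m+n}(τ*(σ₁'⊗σ₂'), τ*(σ₁⊗σ₂)) = g_m(σ₁',σ₁) · g_n(σ₂',σ₂); moreover, if σ₁' is an m'-form and σ₂' an n'-form with m' + n' = m + n but (m',n') ≠ (m,n), then g_{m+n}(τ*(σ₁'⊗σ₂'), τ*(σ₁⊗σ₂)) = 0. -/
open scoped BigOperators

def IsONBasis {L : Type*} [AddCommGroup L] [Module ℝ L] {ι : Type*}
    (g : L → L → ℝ) (b : Module.Basis ι ℝ L) : Prop :=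
  (∀ i j, i ≠ j → g (b i) (b j) = 0) ∧ ∀ i, g (b i) (b i) = 1 ∨ g (b i) (b i) = -1

noncomputable def fockPair {L : Type*} [AddCommGroup L] [Module ℝ L]
    {ι : Type*} [Fintype ι] (g : L → L → ℝ) (b : ι → L) {n : ℕ}
    (σ' σ : AlternatingMap ℝ L ℝ (Fin n)) : ℝ :=
  (Nat.factorial n : ℝ) * ∑ f : Fin n → ι,
    (∏ k, g (b (f k)) (b (f k))) *
      (σ' (fun k => b (f k)) * σ (fun k => b (f k)))

lemma sq_pm {x : ℝ} (h : x = 1 ∨ x = -1) : x * x = 1 := by rcases h with h | h <;> rw [h] <;> norm_num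

lemma fock_expand {L : Type*} [AddCommGroup L] [Module ℝ L] {ι : Type*} [Fintype ι]
    {n : ℕ} (σ : AlternatingMap ℝ L ℝ (Fin n)) (w : Fin n → ι → ℝ) (b : ι → L) :
    σ (fun k => ∑ i, w k i • b i) =
      ∑ F : Fin n → ι, (∏ k, w k (F k)) * σ (fun k => b (F k)) := by
  have h1 := σ.toMultilinearMap.map_sum (fun (k : Fin n) (i : ι) => w k i • b i)
  simp only [AlternatingMap.coe_multilinearMap] at h1
  rw [h1]
  refine Finset.sum_congr rfl fun F _ => ?_
  have h2 := σ.toMultilinearMap.map_smul_univ (fun k => w k (F k)) (fun k => b (F k))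
  simp only [AlternatingMap.coe_multilinearMap] at h2
  rw [h2, smul_eq_mul]

lemma fock_indep {L : Type*} [AddCommGroup L] [Module ℝ L] {ι ι' : Type*} [Fintype ι] [Fintype ι']
    (B : L →ₗ[ℝ] L →ₗ[ℝ] ℝ) (hsymm : ∀ x y, B x y = B y x)
    (b : Module.Basis ι ℝ L) (hb : IsONBasis (fun x y => B x y) b)
    (b' : Module.Basis ι' ℝ L) (hb' : IsONBasis (fun x y => B x y) b')
    {n : ℕ} (σ' σ : AlternatingMap ℝ L ℝ (Fin n)) :
    fockPair (fun x y => B x y) b' σ' σ = fockPair (fun x y => B x y) b σ' σ := by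
  classical
  set ε : ι → ℝ := fun i => B (b i) (b i) with hε
  set ε' : ι' → ℝ := fun j => B (b' j) (b' j) with hε'
  set c : ι' → ι → ℝ := fun j i => b.repr (b' j) i with hc
  have hbexp : ∀ j, b' j = ∑ i, c j i • b i := fun j => (b.sum_repr (b' j)).symm
  -- (i)
  have key1 : ∀ i j, B (b i) (b' j) = c j i * ε i := by
    intro i j
    rw [hbexp j, map_sum]
    simp only [map_smul, smul_eq_mul]
    rw [Finset.sum_eq_single i]
    · intro l _ hl
      have := hb.1 i l (Ne.symm hl)
      simp only at this
      rw [this, mul_zero]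
    · simp
  -- (ii) expansion of any x in b'
  have key2 : ∀ x : L, x = ∑ j, (ε' j * B x (b' j)) • b' j := by
    intro x
    have hrepr : ∀ j, ε' j * B x (b' j) = b'.repr x j := by
      intro j
      have : B x (b' j) = b'.repr x j * ε' j := by
        conv_lhs => rw [← b'.sum_repr x]
        rw [map_sum, LinearMap.sum_apply]
        rw [Finset.sum_eq_single j]
        · simp only [map_smul, LinearMap.smul_apply, smul_eq_mul]; rfl
        · intro l _ hl
          simp only [map_smul, LinearMap.smul_apply, smul_eq_mul]
          have := hb'.1 l j hl
          simp only at this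
          rw [this, mul_zero]
        · simp
      rw [this, show ε' j * (b'.repr x j * ε' j) = (ε' j * ε' j) * b'.repr x j from by ring,
        sq_pm (hb'.2 j), one_mul]
    conv_lhs => rw [← b'.sum_repr x]
    refine Finset.sum_congr rfl fun j _ => ?_
    rw [hrepr j]
  -- (iii) the S relation
  have key3 : ∀ i k, (∑ j, ε' j * (c j i * c j k)) = if i = k then ε i else 0 := by
    intro i k
    have h1 : B (b i) (b k) = ∑ j, ε' j * (c j k * ε k) * (c j i * ε i) := by
      conv_lhs => rw [key2 (b k)]
      rw [map_sum]
      refine Finset.sum_congr rfl fun j _ => ?_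
      rw [map_smul, smul_eq_mul, key1 k j, key1 i j]
    have h2 : B (b i) (b k) = if i = k then ε i else 0 := by
      by_cases h : i = k
      · subst h; simp [hε]
      · rw [if_neg h]; exact hb.1 i k h
    have h3 : (∑ j, ε' j * (c j i * c j k)) * (ε k * ε i) = if i = k then ε i else 0 := by
      rw [← h2, h1, Finset.sum_mul]
      refine Finset.sum_congr rfl fun j _ => ?_
      ring
    have hεk : ε k * ε k = 1 := sq_pm (hb.2 k)
    have hεi : ε i * ε i = 1 := sq_pm (hb.2 i)
    by_cases h : i = k
    · subst h
      rw [if_pos rfl]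
      rw [if_pos rfl, hεi, mul_one] at h3
      exact h3
    · rw [if_neg h]
      rw [if_neg h] at h3
      have hk0 : ε k ≠ 0 := fun h0 => by simp [h0] at hεk
      have hi0 : ε i ≠ 0 := fun h0 => by simp [h0] at hεi
      exact (mul_eq_zero.1 h3).resolve_right (mul_ne_zero hk0 hi0)
  -- main computation
  unfold fockPair
  congr 1
  calc ∑ f : Fin n → ι', (∏ k, B (b' (f k)) (b' (f k))) *
        (σ' (fun k => b' (f k)) * σ (fun k => b' (f k)))
      = ∑ f : Fin n → ι', ∑ F : Fin n → ι, ∑ G : Fin n → ι,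
          ((σ' fun k => b (F k)) * (σ fun k => b (G k))) *
          ∏ k, (ε' (f k) * (c (f k) (F k) * c (f k) (G k))) := by
        refine Finset.sum_congr rfl fun f _ => ?_
        have e1 : (σ' fun k => b' (f k)) = ∑ F : Fin n → ι, (∏ k, c (f k) (F k)) * σ' (fun k => b (F k)) := by
          rw [show (fun k => b' (f k)) = fun k => ∑ i, c (f k) i • b i from funext fun k => hbexp (f k)]
          exact fock_expand σ' (fun k => c (f k)) b
        have e2 : (σ fun k => b' (f k)) = ∑ G : Fin n → ι, (∏ k, c (f k) (G k)) * σ (fun k => b (G k)) := by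
          rw [show (fun k => b' (f k)) = fun k => ∑ i, c (f k) i • b i from funext fun k => hbexp (f k)]
          exact fock_expand σ (fun k => c (f k)) b
        rw [e1, e2, Finset.sum_mul_sum]
        rw [Finset.mul_sum]
        refine Finset.sum_congr rfl fun F _ => ?_
        rw [Finset.mul_sum]
        refine Finset.sum_congr rfl fun G _ => ?_
        rw [Finset.prod_mul_distrib, Finset.prod_mul_distrib]
        ring
    _ = ∑ F : Fin n → ι, ∑ G : Fin n → ι,
          ((σ' fun k => b (F k)) * (σ fun k => b (G k))) *
          ∑ f : Fin n → ι', ∏ k, (ε' (f k) * (c (f k) (F k) * c (f k) (G k))) := by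
        rw [Finset.sum_comm]
        refine Finset.sum_congr rfl fun F _ => ?_
        rw [Finset.sum_comm]
        refine Finset.sum_congr rfl fun G _ => ?_
        rw [Finset.mul_sum]
    _ = ∑ F : Fin n → ι, (∏ k, ε (F k)) * ((σ' fun k => b (F k)) * (σ fun k => b (F k))) := by
        refine Finset.sum_congr rfl fun F _ => ?_
        have hsumf : ∀ G : Fin n → ι, (∑ f : Fin n → ι', ∏ k, (ε' (f k) * (c (f k) (F k) * c (f k) (G k))))
            = ∏ k, ∑ j, (ε' j * (c j (F k) * c j (G k))) := by
          intro G
          rw [Finset.prod_univ_sum (fun _ => Finset.univ)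
            (fun k j => ε' j * (c j (F k) * c j (G k))), Fintype.piFinset_univ]
        have hprod : ∀ G : Fin n → ι,
            (∏ k, ∑ j, (ε' j * (c j (F k) * c j (G k)))) = if F = G then ∏ k, ε (F k) else 0 := by
          intro G
          have : ∀ k : Fin n, (∑ j, (ε' j * (c j (F k) * c j (G k)))) = if F k = G k then ε (F k) else 0 :=
            fun k => key3 (F k) (G k)
          rw [Finset.prod_congr rfl fun k _ => this k]
          by_cases h : F = G
          · subst h; simp
          · rw [if_neg h]
            obtain ⟨k, hk⟩ := Function.ne_iff.1 h
            exact Finset.prod_eq_zero (Finset.mem_univ k) (if_neg hk)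
        calc ∑ G : Fin n → ι, ((σ' fun k => b (F k)) * (σ fun k => b (G k))) *
              ∑ f : Fin n → ι', ∏ k, (ε' (f k) * (c (f k) (F k) * c (f k) (G k)))
            = ∑ G : Fin n → ι, ((σ' fun k => b (F k)) * (σ fun k => b (G k))) *
              (if F = G then ∏ k, ε (F k) else 0) := by
              refine Finset.sum_congr rfl fun G _ => ?_
              rw [hsumf G, hprod G]
          _ = (∏ k, ε (F k)) * ((σ' fun k => b (F k)) * (σ fun k => b (F k))) := by
              rw [Finset.sum_eq_single F]
              · rw [if_pos rfl]; ring
              · intro G _ hG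
                rw [if_neg (Ne.symm hG), mul_zero]
              · simp
    _ = ∑ F : Fin n → ι, (∏ k, B (b (F k)) (b (F k))) *
          ((σ' fun k => b (F k)) * (σ fun k => b (F k))) := rfl


section H2
variable {L₁ L₂ : Type*} [AddCommGroup L₁] [Module ℝ L₁] [AddCommGroup L₂] [Module ℝ L₂]
variable {ι₁ ι₂ : Type*}

lemma fin_cover {m n : ℕ} (j : Fin (m + n)) :
    (∃ k, j = Fin.castAdd n k) ∨ (∃ k, j = Fin.natAdd m k) :=
  Fin.addCases (motive := fun j => (∃ k, j = Fin.castAdd n k) ∨ (∃ k, j = Fin.natAdd m k))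
    (fun k => Or.inl ⟨k, rfl⟩) (fun k => Or.inr ⟨k, rfl⟩) j

def psiFun {m n : ℕ} (a : Fin m → ι₁) (c : Fin n → ι₂) : Fin (m + n) → ι₁ ⊕ ι₂ :=
  fun j => Fin.addCases (fun k => Sum.inl (a k)) (fun k => Sum.inr (c k)) j

@[simp] lemma psi_castAdd {m n : ℕ} (a : Fin m → ι₁) (c : Fin n → ι₂) (k : Fin m) :
    psiFun a c (Fin.castAdd n k) = Sum.inl (a k) := by simp [psiFun]

@[simp] lemma psi_natAdd {m n : ℕ} (a : Fin m → ι₁) (c : Fin n → ι₂) (k : Fin n) :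
    psiFun a c (Fin.natAdd m k) = Sum.inr (c k) := by simp [psiFun]

def thetaPerm {m n : ℕ} (q : Equiv.Perm (Fin m) × Equiv.Perm (Fin n)) :
    Equiv.Perm (Fin (m + n)) :=
  finSumFinEquiv.permCongr (q.1.sumCongr q.2)

@[simp] lemma theta_castAdd {m n : ℕ} (q : Equiv.Perm (Fin m) × Equiv.Perm (Fin n)) (k : Fin m) :
    thetaPerm q (Fin.castAdd n k) = Fin.castAdd n (q.1 k) := by
  simp [thetaPerm, Equiv.permCongr_apply, ← finSumFinEquiv_apply_left]

@[simp] lemma theta_natAdd {m n : ℕ} (q : Equiv.Perm (Fin m) × Equiv.Perm (Fin n)) (k : Fin n) :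
    thetaPerm q (Fin.natAdd m k) = Fin.natAdd m (q.2 k) := by
  simp [thetaPerm, Equiv.permCongr_apply, ← finSumFinEquiv_apply_right]

lemma castAdd_inj {m n : ℕ} : Function.Injective (Fin.castAdd n : Fin m → Fin (m+n)) := by
  intro x y hxy
  exact Fin.ext (by simpa [Fin.coe_castAdd] using congrArg Fin.val hxy)

lemma natAdd_inj {m n : ℕ} : Function.Injective (Fin.natAdd m : Fin n → Fin (m+n)) := by
  intro x y hxy
  have := congrArg Fin.val hxy
  simp [Fin.coe_natAdd] at this
  exact Fin.ext this

/-- `τ*(σa ⊗ σb)` summand evaluated on basis vectors. -/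
noncomputable def AAform (b₁ : Module.Basis ι₁ ℝ L₁) (b₂ : Module.Basis ι₂ ℝ L₂) {m n : ℕ}
    (σa : AlternatingMap ℝ L₁ ℝ (Fin m)) (σb : AlternatingMap ℝ L₂ ℝ (Fin n))
    (u : Fin (m + n) → ι₁ ⊕ ι₂) : ℝ :=
  σa (fun k => ((b₁.prod b₂) (u (Fin.castAdd n k))).1) *
    σb (fun k => ((b₁.prod b₂) (u (Fin.natAdd m k))).2)

lemma AAform_zero (b₁ : Module.Basis ι₁ ℝ L₁) (b₂ : Module.Basis ι₂ ℝ L₂) {m n : ℕ}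
    (σa : AlternatingMap ℝ L₁ ℝ (Fin m)) (σb : AlternatingMap ℝ L₂ ℝ (Fin n))
    (u : Fin (m + n) → ι₁ ⊕ ι₂)
    (hu : ∀ p : (Fin m → ι₁) × (Fin n → ι₂), u ≠ psiFun p.1 p.2) :
    AAform b₁ b₂ σa σb u = 0 := by
  classical
  by_cases hA : ∀ k : Fin m, ∃ i, u (Fin.castAdd n k) = Sum.inl i
  · by_cases hB : ∀ k : Fin n, ∃ i, u (Fin.natAdd m k) = Sum.inr i
    · exfalso
      choose a ha using hA
      choose c hc using hB
      apply hu (a, c)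
      funext j
      refine Fin.addCases (fun k => ?_) (fun k => ?_) j
      · rw [psi_castAdd, ha k]
      · rw [psi_natAdd, hc k]
    · push_neg at hB
      obtain ⟨k, hk⟩ := hB
      have hz : ((b₁.prod b₂) (u (Fin.natAdd m k))).2 = 0 := by
        rcases hfp : u (Fin.natAdd m k) with i | i
        · simp
        · exact absurd hfp (hk i)
      rw [AAform, σb.map_coord_zero k hz, mul_zero]
  · push_neg at hA
    obtain ⟨k, hk⟩ := hA
    have hz : ((b₁.prod b₂) (u (Fin.castAdd n k))).1 = 0 := by
      rcases hfp : u (Fin.castAdd n k) with i | i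
      · exact absurd hfp (hk i)
      · simp
    rw [AAform, σa.map_coord_zero k hz, zero_mul]

lemma AAform_psi (b₁ : Module.Basis ι₁ ℝ L₁) (b₂ : Module.Basis ι₂ ℝ L₂) {m n : ℕ}
    (σa : AlternatingMap ℝ L₁ ℝ (Fin m)) (σb : AlternatingMap ℝ L₂ ℝ (Fin n))
    (a : Fin m → ι₁) (c : Fin n → ι₂) :
    AAform b₁ b₂ σa σb (psiFun a c) =
      σa (fun k => b₁ (a k)) * σb (fun k => b₂ (c k)) := by
  rw [AAform]
  congr 1 <;> · congr 1; funext k; simp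

lemma AAform_psi_theta (b₁ : Module.Basis ι₁ ℝ L₁) (b₂ : Module.Basis ι₂ ℝ L₂) {m n : ℕ}
    (σa : AlternatingMap ℝ L₁ ℝ (Fin m)) (σb : AlternatingMap ℝ L₂ ℝ (Fin n))
    (a : Fin m → ι₁) (c : Fin n → ι₂) (q : Equiv.Perm (Fin m) × Equiv.Perm (Fin n)) :
    AAform b₁ b₂ σa σb (psiFun a c ∘ ⇑(thetaPerm q)) =
      (((Equiv.Perm.sign q.1 : ℤ) : ℝ) * ((Equiv.Perm.sign q.2 : ℤ) : ℝ)) *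
        (σa (fun k => b₁ (a k)) * σb (fun k => b₂ (c k))) := by
  classical
  rw [AAform]
  have h1 : (fun k => ((b₁.prod b₂) ((psiFun a c ∘ ⇑(thetaPerm q)) (Fin.castAdd n k))).1)
      = (fun k => b₁ (a k)) ∘ ⇑q.1 := by
    funext k; simp [Function.comp]
  have h2 : (fun k => ((b₁.prod b₂) ((psiFun a c ∘ ⇑(thetaPerm q)) (Fin.natAdd m k))).2)
      = (fun k => b₂ (c k)) ∘ ⇑q.2 := by
    funext k; simp [Function.comp]
  rw [h1, h2, AlternatingMap.map_perm, AlternatingMap.map_perm]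
  simp only [Units.smul_def, zsmul_eq_mul]
  push_cast
  ring

lemma AAform_psi_comp_zero (b₁ : Module.Basis ι₁ ℝ L₁) (b₂ : Module.Basis ι₂ ℝ L₂) {m n : ℕ}
    (σa : AlternatingMap ℝ L₁ ℝ (Fin m)) (σb : AlternatingMap ℝ L₂ ℝ (Fin n))
    (a : Fin m → ι₁) (c : Fin n → ι₂) (s : Equiv.Perm (Fin (m + n)))
    (hs : ∀ q : Equiv.Perm (Fin m) × Equiv.Perm (Fin n), s ≠ thetaPerm q) :
    AAform b₁ b₂ σa σb (psiFun a c ∘ ⇑s) = 0 := by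
  classical
  by_cases h1 : ∀ k : Fin m, ∃ k', s (Fin.castAdd n k) = Fin.castAdd n k'
  · by_cases h2 : ∀ k : Fin n, ∃ k', s (Fin.natAdd m k) = Fin.natAdd m k'
    · exfalso
      choose p1 hp1 using h1
      choose p2 hp2 using h2
      have hp1i : Function.Injective p1 := by
        intro x y hxy
        apply castAdd_inj (s.injective ?_)
        rw [hp1 x, hp1 y, hxy]
      have hp2i : Function.Injective p2 := by
        intro x y hxy
        apply natAdd_inj (s.injective ?_)
        rw [hp2 x, hp2 y, hxy]
      let q1 : Equiv.Perm (Fin m) := Equiv.ofBijective p1 (Finite.injective_iff_bijective.1 hp1i)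
      let q2 : Equiv.Perm (Fin n) := Equiv.ofBijective p2 (Finite.injective_iff_bijective.1 hp2i)
      apply hs (q1, q2)
      apply Equiv.ext
      intro j
      refine Fin.addCases (fun k => ?_) (fun k => ?_) j
      · rw [theta_castAdd, hp1 k]
        rfl
      · rw [theta_natAdd, hp2 k]
        rfl
    · push_neg at h2
      obtain ⟨k, hk⟩ := h2
      have : ∃ k', s (Fin.natAdd m k) = Fin.castAdd n k' := by
        rcases fin_cover (s (Fin.natAdd m k)) with h | h
        · exact h
        · obtain ⟨k', hk'⟩ := h
          exact absurd hk' (hk k')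
      obtain ⟨k', hk'⟩ := this
      have hz : ((b₁.prod b₂) ((psiFun a c ∘ ⇑s) (Fin.natAdd m k))).2 = 0 := by
        simp [Function.comp, hk']
      rw [AAform, σb.map_coord_zero k hz, mul_zero]
  · push_neg at h1
    obtain ⟨k, hk⟩ := h1
    have : ∃ k', s (Fin.castAdd n k) = Fin.natAdd m k' := by
      rcases fin_cover (s (Fin.castAdd n k)) with h | h
      · obtain ⟨k', hk'⟩ := h
        exact absurd hk' (hk k')
      · exact h
    obtain ⟨k', hk'⟩ := this
    have hz : ((b₁.prod b₂) ((psiFun a c ∘ ⇑s) (Fin.castAdd n k))).1 = 0 := by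
      simp [Function.comp, hk']
    rw [AAform, σa.map_coord_zero k hz, zero_mul]

end H2


section H3
variable {L₁ L₂ : Type*} [AddCommGroup L₁] [Module ℝ L₁] [AddCommGroup L₂] [Module ℝ L₂]
variable {ι₁ ι₂ : Type*}

/-- If the number of `inl`-values of `f` is not `m'`, every term of the
antisymmetrization sum vanishes. -/
lemma zero_term [Fintype ι₁] [Fintype ι₂] [DecidableEq ι₁] [DecidableEq ι₂]
    (b₁ : Module.Basis ι₁ ℝ L₁) (b₂ : Module.Basis ι₂ ℝ L₂) {N m' n' : ℕ}
    (σa : AlternatingMap ℝ L₁ ℝ (Fin m')) (σb : AlternatingMap ℝ L₂ ℝ (Fin n'))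
    (f : Fin N → ι₁ ⊕ ι₂) (ca : Fin m' → Fin N) (na : Fin n' → Fin N)
    (hcover : ∀ j, (∃ k, j = ca k) ∨ (∃ k, j = na k)) (hca : Function.Injective ca)
    (hcard : (Finset.univ.filter (fun j => (f j).isLeft = true)).card ≠ m')
    (π : Equiv.Perm (Fin N)) :
    σa (fun k => ((b₁.prod b₂) (f (π (ca k)))).1) *
      σb (fun k => ((b₁.prod b₂) (f (π (na k)))).2) = 0 := by
  classical
  by_cases hA : ∀ k, ∃ i, f (π (ca k)) = Sum.inl i
  · by_cases hB : ∀ k, ∃ i, f (π (na k)) = Sum.inr i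
    · exfalso
      apply hcard
      have himg : (Finset.univ.filter (fun j => (f j).isLeft = true)) =
          Finset.univ.image (fun k => π (ca k)) := by
        ext j
        simp only [Finset.mem_filter, Finset.mem_univ, true_and, Finset.mem_image]
        constructor
        · intro hj
          rcases hcover (π.symm j) with ⟨k, hk⟩ | ⟨k, hk⟩
          · exact ⟨k, by rw [← hk]; simp⟩
          · exfalso
            obtain ⟨i, hi⟩ := hB k
            rw [← hk] at hi
            simp only [Equiv.apply_symm_apply] at hi
            rw [hi] at hj
            simp at hj
        · rintro ⟨k, rfl⟩
          obtain ⟨i, hi⟩ := hA k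
          rw [hi]
          rfl
      have hinj : Function.Injective (fun k => π (ca k)) := fun x y hxy => hca (π.injective hxy)
      rw [himg, Finset.card_image_of_injective _ hinj]
      simp
    · push_neg at hB
      obtain ⟨k, hk⟩ := hB
      have : ((b₁.prod b₂) (f (π (na k)))).2 = 0 := by
        rcases hfp : f (π (na k)) with i | i
        · simp
        · exact absurd hfp (hk i)
      rw [σb.map_coord_zero k this]
      simp
  · push_neg at hA
    obtain ⟨k, hk⟩ := hA
    have : ((b₁.prod b₂) (f (π (ca k)))).1 = 0 := by
      rcases hfp : f (π (ca k)) with i | i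
      · exact absurd hfp (hk i)
      · simp
    rw [σa.map_coord_zero k this]
    simp

end H3

section H2b
variable {L₁ L₂ : Type*} [AddCommGroup L₁] [Module ℝ L₁] [AddCommGroup L₂] [Module ℝ L₂]
variable {ι₁ ι₂ : Type*}

lemma psi_inj {m n : ℕ} :
    Function.Injective (fun p : (Fin m → ι₁) × (Fin n → ι₂) => psiFun p.1 p.2) := by
  intro p q hpq
  have h1 : p.1 = q.1 := by
    funext k
    have := congrFun hpq (Fin.castAdd n k)
    simpa using this
  have h2 : p.2 = q.2 := by
    funext k
    have := congrFun hpq (Fin.natAdd m k)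
    simpa using this
  exact Prod.ext h1 h2

lemma theta_inj {m n : ℕ} :
    Function.Injective (thetaPerm : Equiv.Perm (Fin m) × Equiv.Perm (Fin n) → _) := by
  intro q q' hqq
  have h1 : q.1 = q'.1 := by
    apply Equiv.ext; intro k
    have := congrFun (congrArg (fun (s : Equiv.Perm (Fin (m+n))) => (s : Fin (m+n) → Fin (m+n))) hqq) (Fin.castAdd n k)
    simp only [theta_castAdd] at this
    exact castAdd_inj this
  have h2 : q.2 = q'.2 := by
    apply Equiv.ext; intro k
    have := congrFun (congrArg (fun (s : Equiv.Perm (Fin (m+n))) => (s : Fin (m+n) → Fin (m+n))) hqq) (Fin.natAdd m k)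
    simp only [theta_natAdd] at this
    exact natAdd_inj this
  exact Prod.ext h1 h2

lemma theta_sign {m n : ℕ} (q : Equiv.Perm (Fin m) × Equiv.Perm (Fin n)) :
    ((Equiv.Perm.sign (thetaPerm q) : ℤ) : ℝ) =
      ((Equiv.Perm.sign q.1 : ℤ) : ℝ) * ((Equiv.Perm.sign q.2 : ℤ) : ℝ) := by
  rw [thetaPerm, Equiv.Perm.sign_permCongr, Equiv.Perm.sign_sumCongr]
  push_cast
  rfl

end H2b

lemma sign_sq_real {α : Type*} [DecidableEq α] [Fintype α] (π : Equiv.Perm α) :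
    ((Equiv.Perm.sign π : ℤ) : ℝ) * ((Equiv.Perm.sign π : ℤ) : ℝ) = 1 := by
  rcases Int.units_eq_one_or (Equiv.Perm.sign π) with h | h <;> rw [h] <;> norm_num

lemma perm_double_sum {N : ℕ} (H : Equiv.Perm (Fin N) → ℝ) :
    ∑ π : Equiv.Perm (Fin N), ∑ ρ : Equiv.Perm (Fin N),
      ((Equiv.Perm.sign π : ℤ) : ℝ) * ((Equiv.Perm.sign ρ : ℤ) : ℝ) * H (π⁻¹ * ρ)
    = (Nat.factorial N : ℝ) * ∑ s : Equiv.Perm (Fin N), ((Equiv.Perm.sign s : ℤ) : ℝ) * H s := by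
  have key : ∀ π : Equiv.Perm (Fin N),
      (∑ ρ : Equiv.Perm (Fin N),
        ((Equiv.Perm.sign π : ℤ) : ℝ) * ((Equiv.Perm.sign ρ : ℤ) : ℝ) * H (π⁻¹ * ρ))
      = ∑ s : Equiv.Perm (Fin N), ((Equiv.Perm.sign s : ℤ) : ℝ) * H s := by
    intro π
    rw [← Equiv.sum_comp (Equiv.mulLeft π)
      (fun ρ => ((Equiv.Perm.sign π : ℤ) : ℝ) * ((Equiv.Perm.sign ρ : ℤ) : ℝ) * H (π⁻¹ * ρ))]
    refine Finset.sum_congr rfl fun s _ => ?_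
    have h1 : Equiv.mulLeft π s = π * s := rfl
    rw [h1]
    have h2 : π⁻¹ * (π * s) = s := by group
    rw [h2]
    have h3 : ((Equiv.Perm.sign (π * s) : ℤ) : ℝ)
        = ((Equiv.Perm.sign π : ℤ) : ℝ) * ((Equiv.Perm.sign s : ℤ) : ℝ) := by
      rw [Equiv.Perm.sign_mul]
      push_cast
      rfl
    rw [h3, show ((Equiv.Perm.sign π : ℤ) : ℝ) * (((Equiv.Perm.sign π : ℤ) : ℝ) * ((Equiv.Perm.sign s : ℤ) : ℝ)) * H s
      = (((Equiv.Perm.sign π : ℤ) : ℝ) * ((Equiv.Perm.sign π : ℤ) : ℝ)) * (((Equiv.Perm.sign s : ℤ) : ℝ) * H s) from by ring,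
      sign_sq_real, one_mul]
  rw [Finset.sum_congr rfl fun π _ => key π, Finset.sum_const, Finset.card_univ,
    Fintype.card_perm, Fintype.card_fin, nsmul_eq_mul]

lemma sum_reduce {α β : Type*} [Fintype α] [Fintype β] [DecidableEq β]
    (g : α → β) (hg : Function.Injective g) (F : β → ℝ)
    (hF : ∀ u, (∀ p, u ≠ g p) → F u = 0) : ∑ u, F u = ∑ p, F (g p) := by
  classical
  rw [← Finset.sum_image (g := g) (f := F) (fun x _ y _ h => hg h)]
  apply (Finset.sum_subset (Finset.subset_univ _) ?_).symm
  intro u _ hu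
  apply hF
  intro p hp
  exact hu (Finset.mem_image.2 ⟨p, Finset.mem_univ p, hp.symm⟩)

section W
variable {L₁ L₂ : Type*} [AddCommGroup L₁] [Module ℝ L₁] [AddCommGroup L₂] [Module ℝ L₂]
variable {ι₁ ι₂ : Type*} [Fintype ι₁] [Fintype ι₂]

noncomputable def Wprod (g₁ : L₁ →ₗ[ℝ] L₁ →ₗ[ℝ] ℝ) (g₂ : L₂ →ₗ[ℝ] L₂ →ₗ[ℝ] ℝ)
    (b₁ : Module.Basis ι₁ ℝ L₁) (b₂ : Module.Basis ι₂ ℝ L₂) {N : ℕ} (f : Fin N → ι₁ ⊕ ι₂) : ℝ :=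
  ∏ k, (g₁ ((b₁.prod b₂) (f k)).1 ((b₁.prod b₂) (f k)).1 +
        g₂ ((b₁.prod b₂) (f k)).2 ((b₁.prod b₂) (f k)).2)

lemma Wprod_comp (g₁ : L₁ →ₗ[ℝ] L₁ →ₗ[ℝ] ℝ) (g₂ : L₂ →ₗ[ℝ] L₂ →ₗ[ℝ] ℝ)
    (b₁ : Module.Basis ι₁ ℝ L₁) (b₂ : Module.Basis ι₂ ℝ L₂) {N : ℕ} (f : Fin N → ι₁ ⊕ ι₂)
    (π : Equiv.Perm (Fin N)) :
    Wprod g₁ g₂ b₁ b₂ (f ∘ ⇑π) = Wprod g₁ g₂ b₁ b₂ f := by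
  rw [Wprod, Wprod]
  exact Equiv.prod_comp π (fun j => g₁ ((b₁.prod b₂) (f j)).1 ((b₁.prod b₂) (f j)).1 +
    g₂ ((b₁.prod b₂) (f j)).2 ((b₁.prod b₂) (f j)).2)

lemma Wprod_psi (g₁ : L₁ →ₗ[ℝ] L₁ →ₗ[ℝ] ℝ) (g₂ : L₂ →ₗ[ℝ] L₂ →ₗ[ℝ] ℝ)
    (b₁ : Module.Basis ι₁ ℝ L₁) (b₂ : Module.Basis ι₂ ℝ L₂) {m n : ℕ}
    (a : Fin m → ι₁) (c : Fin n → ι₂) :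
    Wprod g₁ g₂ b₁ b₂ (psiFun a c) =
      (∏ k, g₁ (b₁ (a k)) (b₁ (a k))) * ∏ k, g₂ (b₂ (c k)) (b₂ (c k)) := by
  rw [Wprod, Fin.prod_univ_add]
  congr 1
  · refine Finset.prod_congr rfl fun k _ => ?_
    simp
  · refine Finset.prod_congr rfl fun k _ => ?_
    simp

end W

lemma fock_prod_eq {L₁ L₂ : Type*} [AddCommGroup L₁] [Module ℝ L₁]
    [AddCommGroup L₂] [Module ℝ L₂] {ι₁ ι₂ : Type*} [Fintype ι₁] [Fintype ι₂]
    (g₁ : L₁ →ₗ[ℝ] L₁ →ₗ[ℝ] ℝ) (g₂ : L₂ →ₗ[ℝ] L₂ →ₗ[ℝ] ℝ)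
    (b₁ : Module.Basis ι₁ ℝ L₁) (b₂ : Module.Basis ι₂ ℝ L₂) {m n : ℕ}
    (σ₁ σ₁' : AlternatingMap ℝ L₁ ℝ (Fin m)) (σ₂ σ₂' : AlternatingMap ℝ L₂ ℝ (Fin n))
    (τ τ' : AlternatingMap ℝ (L₁ × L₂) ℝ (Fin (m + n)))
    (hτ : ∀ v : Fin (m + n) → L₁ × L₂,
      τ v = (Nat.factorial (m + n) : ℝ)⁻¹ * ∑ π : Equiv.Perm (Fin (m + n)),
        ((Equiv.Perm.sign π : ℤ) : ℝ) *
          (σ₁ (fun k : Fin m => (v (π (Fin.castAdd n k))).1) *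
            σ₂ (fun k : Fin n => (v (π (Fin.natAdd m k))).2)))
    (hτ' : ∀ v : Fin (m + n) → L₁ × L₂,
      τ' v = (Nat.factorial (m + n) : ℝ)⁻¹ * ∑ π : Equiv.Perm (Fin (m + n)),
        ((Equiv.Perm.sign π : ℤ) : ℝ) *
          (σ₁' (fun k : Fin m => (v (π (Fin.castAdd n k))).1) *
            σ₂' (fun k : Fin n => (v (π (Fin.natAdd m k))).2))) :
    fockPair (fun v w => g₁ v.1 w.1 + g₂ v.2 w.2) (⇑(b₁.prod b₂)) τ' τ =
      fockPair (fun x y => g₁ x y) b₁ σ₁' σ₁ * fockPair (fun x y => g₂ x y) b₂ σ₂' σ₂ := by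
  classical
  set c : ℝ := (Nat.factorial (m + n) : ℝ)⁻¹ with hc
  have hfac : (Nat.factorial (m + n) : ℝ) ≠ 0 := Nat.cast_ne_zero.2 (Nat.factorial_ne_zero _)
  -- rewrite τ, τ' on basis tuples
  have hτe : ∀ f : Fin (m + n) → ι₁ ⊕ ι₂,
      τ (fun k => (b₁.prod b₂) (f k)) =
        c * ∑ π : Equiv.Perm (Fin (m + n)), ((Equiv.Perm.sign π : ℤ) : ℝ) *
          AAform b₁ b₂ σ₁ σ₂ (f ∘ ⇑π) := by
    intro f
    rw [hτ]
    rfl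
  have hτ'e : ∀ f : Fin (m + n) → ι₁ ⊕ ι₂,
      τ' (fun k => (b₁.prod b₂) (f k)) =
        c * ∑ π : Equiv.Perm (Fin (m + n)), ((Equiv.Perm.sign π : ℤ) : ℝ) *
          AAform b₁ b₂ σ₁' σ₂' (f ∘ ⇑π) := by
    intro f
    rw [hτ']
    rfl
  -- the inner pairing function
  set Hfun : Equiv.Perm (Fin (m + n)) → ℝ := fun s =>
    ∑ u : Fin (m + n) → ι₁ ⊕ ι₂, Wprod g₁ g₂ b₁ b₂ u *
      (AAform b₁ b₂ σ₁' σ₂' u * AAform b₁ b₂ σ₁ σ₂ (u ∘ ⇑s)) with hHfun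
  -- change of variables in the f-sum
  have hchg : ∀ π ρ : Equiv.Perm (Fin (m + n)),
      (∑ f : Fin (m + n) → ι₁ ⊕ ι₂, Wprod g₁ g₂ b₁ b₂ f *
        (AAform b₁ b₂ σ₁' σ₂' (f ∘ ⇑π) * AAform b₁ b₂ σ₁ σ₂ (f ∘ ⇑ρ)))
      = Hfun (π⁻¹ * ρ) := by
    intro π ρ
    rw [hHfun]
    refine (Fintype.sum_equiv (Equiv.arrowCongr π (Equiv.refl (ι₁ ⊕ ι₂)))
      _ _ fun u => ?_).symm
    have h0 : (Equiv.arrowCongr π (Equiv.refl (ι₁ ⊕ ι₂))) u = u ∘ ⇑π.symm := rfl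
    rw [h0]
    have h1 : (u ∘ ⇑π.symm) ∘ ⇑π = u := by
      funext k; simp
    have h2 : (u ∘ ⇑π.symm) ∘ ⇑ρ = u ∘ ⇑(π⁻¹ * ρ) := by
      funext k
      simp [Equiv.Perm.mul_apply]
    rw [h1, h2]
    have h3 : Wprod g₁ g₂ b₁ b₂ (u ∘ ⇑π.symm) = Wprod g₁ g₂ b₁ b₂ u :=
      Wprod_comp g₁ g₂ b₁ b₂ u π⁻¹
    rw [h3]
  -- reduce a sum over functions to a sum over pairs
  have hpsired : ∀ s : Equiv.Perm (Fin (m + n)),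
      Hfun s = ∑ p : (Fin m → ι₁) × (Fin n → ι₂),
        Wprod g₁ g₂ b₁ b₂ (psiFun p.1 p.2) *
          (AAform b₁ b₂ σ₁' σ₂' (psiFun p.1 p.2) *
            AAform b₁ b₂ σ₁ σ₂ (psiFun p.1 p.2 ∘ ⇑s)) := by
    intro s
    rw [hHfun]
    refine sum_reduce (fun p : (Fin m → ι₁) × (Fin n → ι₂) => psiFun p.1 p.2) psi_inj _
      fun u hu => ?_
    rw [AAform_zero b₁ b₂ σ₁' σ₂' u hu]
    ring
  -- the inner permutation sum for a fixed pair
  have hinner : ∀ p : (Fin m → ι₁) × (Fin n → ι₂),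
      (∑ s : Equiv.Perm (Fin (m + n)), ((Equiv.Perm.sign s : ℤ) : ℝ) *
        (Wprod g₁ g₂ b₁ b₂ (psiFun p.1 p.2) *
          (AAform b₁ b₂ σ₁' σ₂' (psiFun p.1 p.2) *
            AAform b₁ b₂ σ₁ σ₂ (psiFun p.1 p.2 ∘ ⇑s))))
      = ((Nat.factorial m : ℝ) * (Nat.factorial n : ℝ)) *
          (Wprod g₁ g₂ b₁ b₂ (psiFun p.1 p.2) *
            (AAform b₁ b₂ σ₁' σ₂' (psiFun p.1 p.2) *
              (σ₁ (fun k => b₁ (p.1 k)) * σ₂ (fun k => b₂ (p.2 k))))) := by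
    intro p
    rw [sum_reduce (thetaPerm : Equiv.Perm (Fin m) × Equiv.Perm (Fin n) → _) theta_inj _
      (fun s hs => by rw [AAform_psi_comp_zero b₁ b₂ σ₁ σ₂ p.1 p.2 s hs]; ring)]
    have hterm : ∀ q : Equiv.Perm (Fin m) × Equiv.Perm (Fin n),
        ((Equiv.Perm.sign (thetaPerm q) : ℤ) : ℝ) *
          (Wprod g₁ g₂ b₁ b₂ (psiFun p.1 p.2) *
            (AAform b₁ b₂ σ₁' σ₂' (psiFun p.1 p.2) *
              AAform b₁ b₂ σ₁ σ₂ (psiFun p.1 p.2 ∘ ⇑(thetaPerm q))))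
        = Wprod g₁ g₂ b₁ b₂ (psiFun p.1 p.2) *
            (AAform b₁ b₂ σ₁' σ₂' (psiFun p.1 p.2) *
              (σ₁ (fun k => b₁ (p.1 k)) * σ₂ (fun k => b₂ (p.2 k)))) := by
      intro q
      rw [theta_sign, AAform_psi_theta]
      have e1 := sign_sq_real q.1
      have e2 := sign_sq_real q.2
      set s1 : ℝ := ((Equiv.Perm.sign q.1 : ℤ) : ℝ)
      set s2 : ℝ := ((Equiv.Perm.sign q.2 : ℤ) : ℝ)
      set W : ℝ := Wprod g₁ g₂ b₁ b₂ (psiFun p.1 p.2)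
      set A : ℝ := AAform b₁ b₂ σ₁' σ₂' (psiFun p.1 p.2)
      set X : ℝ := σ₁ (fun k => b₁ (p.1 k)) * σ₂ (fun k => b₂ (p.2 k))
      calc s1 * s2 * (W * (A * (s1 * s2 * X)))
          = (s1 * s1) * ((s2 * s2) * (W * (A * X))) := by ring
        _ = W * (A * X) := by rw [e1, e2]; ring
    rw [Finset.sum_congr rfl fun q _ => hterm q, Finset.sum_const, Finset.card_univ,
      Fintype.card_prod, Fintype.card_perm, Fintype.card_perm, Fintype.card_fin,
      Fintype.card_fin, nsmul_eq_mul]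
    push_cast
    ring
  -- main calculation
  calc fockPair (fun v w => g₁ v.1 w.1 + g₂ v.2 w.2) (⇑(b₁.prod b₂)) τ' τ
      = (Nat.factorial (m + n) : ℝ) * ∑ f : Fin (m + n) → ι₁ ⊕ ι₂,
          Wprod g₁ g₂ b₁ b₂ f *
            (τ' (fun k => (b₁.prod b₂) (f k)) * τ (fun k => (b₁.prod b₂) (f k))) := rfl
    _ = (Nat.factorial (m + n) : ℝ) * (c * c *
          ∑ π : Equiv.Perm (Fin (m + n)), ∑ ρ : Equiv.Perm (Fin (m + n)),
            ((Equiv.Perm.sign π : ℤ) : ℝ) * ((Equiv.Perm.sign ρ : ℤ) : ℝ) *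
              ∑ f : Fin (m + n) → ι₁ ⊕ ι₂, Wprod g₁ g₂ b₁ b₂ f *
                (AAform b₁ b₂ σ₁' σ₂' (f ∘ ⇑π) * AAform b₁ b₂ σ₁ σ₂ (f ∘ ⇑ρ))) := by
        congr 1
        calc (∑ f : Fin (m + n) → ι₁ ⊕ ι₂, Wprod g₁ g₂ b₁ b₂ f *
              (τ' (fun k => (b₁.prod b₂) (f k)) * τ (fun k => (b₁.prod b₂) (f k))))
            = ∑ f : Fin (m + n) → ι₁ ⊕ ι₂, c * c *
                ∑ π : Equiv.Perm (Fin (m + n)), ∑ ρ : Equiv.Perm (Fin (m + n)),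
                  ((Equiv.Perm.sign π : ℤ) : ℝ) * ((Equiv.Perm.sign ρ : ℤ) : ℝ) *
                    (Wprod g₁ g₂ b₁ b₂ f *
                      (AAform b₁ b₂ σ₁' σ₂' (f ∘ ⇑π) * AAform b₁ b₂ σ₁ σ₂ (f ∘ ⇑ρ))) := by
              refine Finset.sum_congr rfl fun f _ => ?_
              rw [hτ'e f, hτe f, mul_mul_mul_comm, Finset.sum_mul_sum, mul_left_comm]
              congr 1
              rw [Finset.mul_sum]
              refine Finset.sum_congr rfl fun π _ => ?_
              rw [Finset.mul_sum]
              refine Finset.sum_congr rfl fun ρ _ => ?_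
              ring
          _ = c * c * ∑ π : Equiv.Perm (Fin (m + n)), ∑ ρ : Equiv.Perm (Fin (m + n)),
                ((Equiv.Perm.sign π : ℤ) : ℝ) * ((Equiv.Perm.sign ρ : ℤ) : ℝ) *
                  ∑ f : Fin (m + n) → ι₁ ⊕ ι₂, Wprod g₁ g₂ b₁ b₂ f *
                    (AAform b₁ b₂ σ₁' σ₂' (f ∘ ⇑π) * AAform b₁ b₂ σ₁ σ₂ (f ∘ ⇑ρ)) := by
              rw [← Finset.mul_sum]
              congr 1
              rw [Finset.sum_comm]
              refine Finset.sum_congr rfl fun π _ => ?_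
              rw [Finset.sum_comm]
              refine Finset.sum_congr rfl fun ρ _ => ?_
              rw [Finset.mul_sum]
    _ = (Nat.factorial (m + n) : ℝ) * (c * c *
          ∑ π : Equiv.Perm (Fin (m + n)), ∑ ρ : Equiv.Perm (Fin (m + n)),
            ((Equiv.Perm.sign π : ℤ) : ℝ) * ((Equiv.Perm.sign ρ : ℤ) : ℝ) *
              Hfun (π⁻¹ * ρ)) := by
        congr 2
        refine Finset.sum_congr rfl fun π _ => Finset.sum_congr rfl fun ρ _ => ?_
        rw [hchg π ρ]
    _ = (Nat.factorial (m + n) : ℝ) * (c * c * ((Nat.factorial (m + n) : ℝ) *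
          ∑ s : Equiv.Perm (Fin (m + n)), ((Equiv.Perm.sign s : ℤ) : ℝ) * Hfun s)) := by
        rw [perm_double_sum]
    _ = ∑ s : Equiv.Perm (Fin (m + n)), ((Equiv.Perm.sign s : ℤ) : ℝ) * Hfun s := by
        rw [hc]
        field_simp
    _ = ∑ p : (Fin m → ι₁) × (Fin n → ι₂),
          ∑ s : Equiv.Perm (Fin (m + n)), ((Equiv.Perm.sign s : ℤ) : ℝ) *
            (Wprod g₁ g₂ b₁ b₂ (psiFun p.1 p.2) *
              (AAform b₁ b₂ σ₁' σ₂' (psiFun p.1 p.2) *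
                AAform b₁ b₂ σ₁ σ₂ (psiFun p.1 p.2 ∘ ⇑s))) := by
        rw [Finset.sum_comm]
        refine Finset.sum_congr rfl fun s _ => ?_
        rw [hpsired s, Finset.mul_sum]
    _ = ∑ p : (Fin m → ι₁) × (Fin n → ι₂),
          ((Nat.factorial m : ℝ) * (Nat.factorial n : ℝ)) *
            (Wprod g₁ g₂ b₁ b₂ (psiFun p.1 p.2) *
              (AAform b₁ b₂ σ₁' σ₂' (psiFun p.1 p.2) *
                (σ₁ (fun k => b₁ (p.1 k)) * σ₂ (fun k => b₂ (p.2 k))))) := by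
        exact Finset.sum_congr rfl fun p _ => hinner p
    _ = fockPair (fun x y => g₁ x y) b₁ σ₁' σ₁ * fockPair (fun x y => g₂ x y) b₂ σ₂' σ₂ := by
        rw [fockPair, fockPair]
        rw [Fintype.sum_prod_type]
        conv_rhs => rw [mul_mul_mul_comm, Finset.sum_mul_sum, Finset.mul_sum]
        refine Finset.sum_congr rfl fun a _ => ?_
        conv_rhs => rw [Finset.mul_sum]
        refine Finset.sum_congr rfl fun d _ => ?_
        rw [Wprod_psi, AAform_psi]
        ring

/-- For `L = L₁ × L₂` with the direct-sum form `g = g₁ ⊕ g₂`, the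
antisymmetrized product `τ*(σ₁⊗σ₂)` of an alternating `m`-form `σ₁` on `L₁` and an
alternating `n`-form `σ₂` on `L₂` satisfies
`g_{m+n}(τ*(σ₁'⊗σ₂'), τ*(σ₁⊗σ₂)) = g_m(σ₁',σ₁) · g_n(σ₂',σ₂)`, and the pairing of
antisymmetrized products of mismatched bidegrees `(m',n') ≠ (m,n)` (with `m'+n' = m+n`)
vanishes. -/
theorem stmt11 {L₁ L₂ : Type*} [AddCommGroup L₁] [Module ℝ L₁] [FiniteDimensional ℝ L₁]
    [AddCommGroup L₂] [Module ℝ L₂] [FiniteDimensional ℝ L₂]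
    (g₁ : L₁ →ₗ[ℝ] L₁ →ₗ[ℝ] ℝ) (hg₁symm : ∀ x y, g₁ x y = g₁ y x)
    (hg₁nondeg : ∀ x, (∀ y, g₁ x y = 0) → x = 0)
    (g₂ : L₂ →ₗ[ℝ] L₂ →ₗ[ℝ] ℝ) (hg₂symm : ∀ x y, g₂ x y = g₂ y x)
    (hg₂nondeg : ∀ x, (∀ y, g₂ x y = 0) → x = 0)
    (g : L₁ × L₂ → L₁ × L₂ → ℝ)
    (hg : ∀ v w, g v w = g₁ v.1 w.1 + g₂ v.2 w.2)
    {ι₁ ι₂ κ : Type*} [Fintype ι₁] [Fintype ι₂] [Fintype κ]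
    (b₁ : Module.Basis ι₁ ℝ L₁) (hb₁ : IsONBasis (fun x y => g₁ x y) b₁)
    (b₂ : Module.Basis ι₂ ℝ L₂) (hb₂ : IsONBasis (fun x y => g₂ x y) b₂)
    (b : Module.Basis κ ℝ (L₁ × L₂)) (hb : IsONBasis g b)
    {m n : ℕ}
    (σ₁ σ₁' : AlternatingMap ℝ L₁ ℝ (Fin m)) (σ₂ σ₂' : AlternatingMap ℝ L₂ ℝ (Fin n))
    (τ τ' : AlternatingMap ℝ (L₁ × L₂) ℝ (Fin (m + n)))
    (hτ : ∀ v : Fin (m + n) → L₁ × L₂,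
      τ v = (Nat.factorial (m + n) : ℝ)⁻¹ * ∑ π : Equiv.Perm (Fin (m + n)),
        ((Equiv.Perm.sign π : ℤ) : ℝ) *
          (σ₁ (fun k : Fin m => (v (π (Fin.castAdd n k))).1) *
            σ₂ (fun k : Fin n => (v (π (Fin.natAdd m k))).2)))
    (hτ' : ∀ v : Fin (m + n) → L₁ × L₂,
      τ' v = (Nat.factorial (m + n) : ℝ)⁻¹ * ∑ π : Equiv.Perm (Fin (m + n)),
        ((Equiv.Perm.sign π : ℤ) : ℝ) *
          (σ₁' (fun k : Fin m => (v (π (Fin.castAdd n k))).1) *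
            σ₂' (fun k : Fin n => (v (π (Fin.natAdd m k))).2))) :
    fockPair g b τ' τ = fockPair (fun x y => g₁ x y) b₁ σ₁' σ₁ *
        fockPair (fun x y => g₂ x y) b₂ σ₂' σ₂ ∧
    (∀ (m' n' : ℕ) (h : m' + n' = m + n), (m', n') ≠ (m, n) →
      ∀ (ρ₁ : AlternatingMap ℝ L₁ ℝ (Fin m')) (ρ₂ : AlternatingMap ℝ L₂ ℝ (Fin n'))
        (τ'' : AlternatingMap ℝ (L₁ × L₂) ℝ (Fin (m + n))),
        (∀ v : Fin (m + n) → L₁ × L₂,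
          τ'' v = (Nat.factorial (m + n) : ℝ)⁻¹ * ∑ π : Equiv.Perm (Fin (m + n)),
            ((Equiv.Perm.sign π : ℤ) : ℝ) *
              (ρ₁ (fun k : Fin m' => (v (π (Fin.cast h (Fin.castAdd n' k)))).1) *
                ρ₂ (fun k : Fin n' => (v (π (Fin.cast h (Fin.natAdd m' k)))).2))) →
        fockPair g b τ'' τ = 0) := by
  classical
  -- the bilinear form on the product
  set B : (L₁ × L₂) →ₗ[ℝ] (L₁ × L₂) →ₗ[ℝ] ℝ :=
    LinearMap.mk₂ ℝ (fun v w => g₁ v.1 w.1 + g₂ v.2 w.2)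
      (fun x y z => by
        simp only [Prod.fst_add, Prod.snd_add, map_add, LinearMap.add_apply]; ring)
      (fun r x y => by
        simp only [Prod.smul_fst, Prod.smul_snd, map_smul, LinearMap.smul_apply,
          smul_eq_mul]; ring)
      (fun x y z => by
        simp only [Prod.fst_add, Prod.snd_add, map_add, LinearMap.add_apply]; ring)
      (fun r x y => by
        simp only [Prod.smul_fst, Prod.smul_snd, map_smul, smul_eq_mul]; ring) with hB
  have hgB : g = fun v w => B v w := by
    funext v w
    rw [hg]
    rfl
  have hBsymm : ∀ x y : L₁ × L₂, B x y = B y x := by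
    intro x y
    show g₁ x.1 y.1 + g₂ x.2 y.2 = g₁ y.1 x.1 + g₂ y.2 x.2
    rw [hg₁symm x.1 y.1, hg₂symm x.2 y.2]
  -- the product basis is orthonormal
  have hbe : IsONBasis (fun x y => B x y) (b₁.prod b₂) := by
    constructor
    · rintro (i | i) (j | j) hij
      · have hij' : i ≠ j := fun hh => hij (by rw [hh])
        show g₁ ((b₁.prod b₂) (Sum.inl i)).1 ((b₁.prod b₂) (Sum.inl j)).1 +
          g₂ ((b₁.prod b₂) (Sum.inl i)).2 ((b₁.prod b₂) (Sum.inl j)).2 = 0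
        rw [Module.Basis.prod_apply_inl_fst, Module.Basis.prod_apply_inl_fst,
          Module.Basis.prod_apply_inl_snd, Module.Basis.prod_apply_inl_snd]
        have h0 : g₁ (b₁ i) (b₁ j) = 0 := hb₁.1 i j hij'
        rw [h0]
        simp
      · show g₁ ((b₁.prod b₂) (Sum.inl i)).1 ((b₁.prod b₂) (Sum.inr j)).1 +
          g₂ ((b₁.prod b₂) (Sum.inl i)).2 ((b₁.prod b₂) (Sum.inr j)).2 = 0
        simp
      · show g₁ ((b₁.prod b₂) (Sum.inr i)).1 ((b₁.prod b₂) (Sum.inl j)).1 +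
          g₂ ((b₁.prod b₂) (Sum.inr i)).2 ((b₁.prod b₂) (Sum.inl j)).2 = 0
        simp
      · have hij' : i ≠ j := fun hh => hij (by rw [hh])
        show g₁ ((b₁.prod b₂) (Sum.inr i)).1 ((b₁.prod b₂) (Sum.inr j)).1 +
          g₂ ((b₁.prod b₂) (Sum.inr i)).2 ((b₁.prod b₂) (Sum.inr j)).2 = 0
        rw [Module.Basis.prod_apply_inr_fst, Module.Basis.prod_apply_inr_fst,
          Module.Basis.prod_apply_inr_snd, Module.Basis.prod_apply_inr_snd]
        have h0 : g₂ (b₂ i) (b₂ j) = 0 := hb₂.1 i j hij'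
        rw [h0]
        simp
    · rintro (i | i)
      · show g₁ ((b₁.prod b₂) (Sum.inl i)).1 ((b₁.prod b₂) (Sum.inl i)).1 +
          g₂ ((b₁.prod b₂) (Sum.inl i)).2 ((b₁.prod b₂) (Sum.inl i)).2 = 1 ∨
          g₁ ((b₁.prod b₂) (Sum.inl i)).1 ((b₁.prod b₂) (Sum.inl i)).1 +
          g₂ ((b₁.prod b₂) (Sum.inl i)).2 ((b₁.prod b₂) (Sum.inl i)).2 = -1
        rw [Module.Basis.prod_apply_inl_fst, Module.Basis.prod_apply_inl_snd]
        rcases hb₁.2 i with hh | hh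
        · left
          have hh' : g₁ (b₁ i) (b₁ i) = 1 := hh
          rw [hh']; simp
        · right
          have hh' : g₁ (b₁ i) (b₁ i) = -1 := hh
          rw [hh']; simp
      · show g₁ ((b₁.prod b₂) (Sum.inr i)).1 ((b₁.prod b₂) (Sum.inr i)).1 +
          g₂ ((b₁.prod b₂) (Sum.inr i)).2 ((b₁.prod b₂) (Sum.inr i)).2 = 1 ∨
          g₁ ((b₁.prod b₂) (Sum.inr i)).1 ((b₁.prod b₂) (Sum.inr i)).1 +
          g₂ ((b₁.prod b₂) (Sum.inr i)).2 ((b₁.prod b₂) (Sum.inr i)).2 = -1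
        rw [Module.Basis.prod_apply_inr_fst, Module.Basis.prod_apply_inr_snd]
        rcases hb₂.2 i with hh | hh
        · left
          have hh' : g₂ (b₂ i) (b₂ i) = 1 := hh
          rw [hh']; simp
        · right
          have hh' : g₂ (b₂ i) (b₂ i) = -1 := hh
          rw [hh']; simp
  have hb' : IsONBasis (fun x y => B x y) b := by rw [hgB] at hb; exact hb
  constructor
  · -- the main equality
    rw [hgB]
    rw [fock_indep B hBsymm (b₁.prod b₂) hbe b hb' τ' τ]
    exact fock_prod_eq g₁ g₂ b₁ b₂ σ₁ σ₁' σ₂ σ₂' τ τ' hτ hτ'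
  · -- mismatched bidegrees
    intro m' n' h hne ρ₁ ρ₂ τ'' hτ''
    have hm' : m' ≠ m := by
      intro hm
      apply hne
      subst hm
      have hn : n' = n := by omega
      subst hn
      rfl
    rw [hgB, fock_indep B hBsymm (b₁.prod b₂) hbe b hb' τ'' τ]
    rw [show fockPair (fun x y => B x y) (⇑(b₁.prod b₂)) τ'' τ =
      (Nat.factorial (m + n) : ℝ) * ∑ f : Fin (m + n) → ι₁ ⊕ ι₂,
        (∏ k, B ((b₁.prod b₂) (f k)) ((b₁.prod b₂) (f k))) *
          (τ'' (fun k => (b₁.prod b₂) (f k)) * τ (fun k => (b₁.prod b₂) (f k))) from rfl]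
    apply mul_eq_zero_of_right
    apply Finset.sum_eq_zero
    intro f _
    by_cases hcard : (Finset.univ.filter (fun j => (f j).isLeft = true)).card = m
    · -- then τ'' vanishes on this tuple
      have hz : τ'' (fun k => (b₁.prod b₂) (f k)) = 0 := by
        rw [hτ'']
        rw [Finset.sum_eq_zero, mul_zero]
        intro π _
        have hcover : ∀ j : Fin (m + n), (∃ k, j = Fin.cast h (Fin.castAdd n' k)) ∨
            (∃ k, j = Fin.cast h (Fin.natAdd m' k)) := by
          intro j
          have hj : j = Fin.cast h (Fin.cast h.symm j) := by
            apply Fin.ext; simp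
          rcases fin_cover (Fin.cast h.symm j) with ⟨k, hk⟩ | ⟨k, hk⟩
          · exact Or.inl ⟨k, by rw [hj, hk]⟩
          · exact Or.inr ⟨k, by rw [hj, hk]⟩
        have hcain : Function.Injective (fun k : Fin m' => Fin.cast h (Fin.castAdd n' k)) := by
          intro x y hxy
          apply Fin.ext
          have := congrArg Fin.val hxy
          simpa using this
        have hcard' : (Finset.univ.filter (fun j => (f j).isLeft = true)).card ≠ m' := by
          rw [hcard]
          exact fun hh => hm' hh.symm
        rw [zero_term b₁ b₂ ρ₁ ρ₂ f (fun k => Fin.cast h (Fin.castAdd n' k))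
          (fun k => Fin.cast h (Fin.natAdd m' k)) hcover hcain hcard' π, mul_zero]
      rw [hz]
      ring
    · -- then τ vanishes on this tuple
      have hz : τ (fun k => (b₁.prod b₂) (f k)) = 0 := by
        rw [hτ]
        rw [Finset.sum_eq_zero, mul_zero]
        intro π _
        rw [zero_term b₁ b₂ σ₁ σ₂ f (Fin.castAdd n) (Fin.natAdd m) fin_cover
          castAdd_inj hcard π, mul_zero]
      rw [hz]
      ring
end

section
/- Let L be a finite-dimensional real vector space with a nondegenerate symmetric bilinear form g, let u : L → L be a linear map, and let σ be an alternating 2n-linear form on L. Then the amplitude A_{g,u}(σ) := ((2n)!/(2ⁿ n!)) (−1)ⁿ Σ_{i₁,…,i_n} ε_{i₁}⋯ε_{i_n} σ(e_{i₁},…,e_{i_n}, u e_{i_n},…, u e_{i₁}), computed with respect to a g-orthonormal basis {e_i} with signs ε_i = g(e_i,e_i) ∈ {1,−1}, is independent of the choice of g-orthonormal basis. -/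
open scoped BigOperators

/-- The argument tuple `(e_{i₁},…,e_{i_n}, u e_{i_n},…, u e_{i₁})`. -/
noncomputable def ampVec {L ι : Type*} (b : ι → L) (u : L → L) {n : ℕ}
    (f : Fin n → ι) : Fin (2 * n) → L := fun j =>
  if h : (j : ℕ) < n then b (f ⟨j, h⟩)
  else u (b (f ⟨2 * n - 1 - j, by have := j.isLt; omega⟩))

/-- The amplitude `A_{g,u}(σ) = ((2n)!/(2ⁿ n!)) (−1)ⁿ Σ ε_{i₁}⋯ε_{i_n}
σ(e_{i₁},…,e_{i_n}, u e_{i_n},…, u e_{i₁})` with respect to a family `b : ι → L`. -/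
noncomputable def amp {L : Type*} [AddCommGroup L] [Module ℝ L]
    {ι : Type*} [Fintype ι] (g : L → L → ℝ) (u : L → L) (b : ι → L) {n : ℕ}
    (σ : AlternatingMap ℝ L ℝ (Fin (2 * n))) : ℝ :=
  ((Nat.factorial (2 * n) : ℝ) / (2 ^ n * Nat.factorial n)) * (-1 : ℝ) ^ n *
    ∑ f : Fin n → ι, (∏ k, g (b (f k)) (b (f k))) * σ (ampVec b u f)

/-! ### Auxiliary definitions and lemmas -/

/-- The folding map `Fin (2n) → Fin n` sending `j ↦ j` for `j < n` and
`j ↦ 2n - 1 - j` otherwise. -/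
def foldIdx (n : ℕ) (j : Fin (2 * n)) : Fin n :=
  ⟨if (j : ℕ) < n then (j : ℕ) else 2 * n - 1 - (j : ℕ), by
    have := j.isLt; split <;> omega⟩

/-- The equivalence `Fin n ⊕ Fin n ≃ Fin (2n)` with `inl k ↦ k` and `inr k ↦ 2n-1-k`. -/
def halfEquiv (n : ℕ) : Fin n ⊕ Fin n ≃ Fin (2 * n) where
  toFun s := Sum.elim (fun k : Fin n => (⟨(k : ℕ), by have := k.isLt; omega⟩ : Fin (2 * n)))
    (fun k : Fin n => (⟨2 * n - 1 - (k : ℕ), by have := k.isLt; omega⟩ : Fin (2 * n))) s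
  invFun j := if h : (j : ℕ) < n then .inl ⟨(j : ℕ), h⟩
    else .inr ⟨2 * n - 1 - (j : ℕ), by have := j.isLt; omega⟩
  left_inv s := by
    rcases s with k | k
    · have hk := k.isLt
      dsimp only [Sum.elim_inl]
      rw [dif_pos hk]
    · have hk := k.isLt
      dsimp only [Sum.elim_inr]
      rw [dif_neg (by omega)]
      congr 1
      ext
      simp only
      omega
  right_inv j := by
    have hj := j.isLt
    dsimp only
    by_cases h : (j : ℕ) < n
    · rw [dif_pos h]
      simp only [Sum.elim_inl]
    · rw [dif_neg h]
      simp only [Sum.elim_inr]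
      ext
      simp only
      omega

lemma foldIdx_left (n : ℕ) (k : Fin n) : foldIdx n (halfEquiv n (.inl k)) = k := by
  have hk := k.isLt
  ext
  dsimp only [foldIdx, halfEquiv, Equiv.coe_fn_mk, Sum.elim_inl]
  show (if (k : ℕ) < n then (k : ℕ) else 2 * n - 1 - (k : ℕ)) = k
  rw [if_pos hk]

lemma foldIdx_right (n : ℕ) (k : Fin n) : foldIdx n (halfEquiv n (.inr k)) = k := by
  have hk := k.isLt
  ext
  dsimp only [foldIdx, halfEquiv, Equiv.coe_fn_mk, Sum.elim_inr]
  show (if 2 * n - 1 - (k : ℕ) < n then 2 * n - 1 - (k : ℕ)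
    else 2 * n - 1 - (2 * n - 1 - (k : ℕ))) = k
  rw [if_neg (by omega)]
  omega

/-- The equivalence between functions `Fin (2n) → ι` and pairs of functions `Fin n → ι`. -/
def pairEquiv (n : ℕ) (ι : Type*) : (Fin (2 * n) → ι) ≃ ((Fin n → ι) × (Fin n → ι)) where
  toFun q := (fun k => q (halfEquiv n (.inl k)), fun k => q (halfEquiv n (.inr k)))
  invFun p := fun j => Sum.elim p.1 p.2 ((halfEquiv n).symm j)
  left_inv q := by
    funext j
    dsimp only
    have h : ∀ s : Fin n ⊕ Fin n,
        Sum.elim (fun k => q (halfEquiv n (.inl k))) (fun k => q (halfEquiv n (.inr k))) s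
          = q (halfEquiv n s) := by rintro (k | k) <;> rfl
    rw [h, Equiv.apply_symm_apply]
  right_inv p := by
    refine Prod.ext (funext fun k => ?_) (funext fun k => ?_) <;>
      simp only [Equiv.symm_apply_apply, Sum.elim_inl, Sum.elim_inr]

lemma pairEquiv_symm_diag {n : ℕ} {ι : Type*} (p : Fin n → ι) :
    (pairEquiv n ι).symm (p, p) = fun j => p (foldIdx n j) := by
  funext j
  show Sum.elim p p ((halfEquiv n).symm j) = p (foldIdx n j)
  rcases h : (halfEquiv n).symm j with k | k
  · have hj : halfEquiv n (.inl k) = j := by rw [← h, Equiv.apply_symm_apply]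
    rw [Sum.elim_inl, ← hj, foldIdx_left]
  · have hj : halfEquiv n (.inr k) = j := by rw [← h, Equiv.apply_symm_apply]
    rw [Sum.elim_inr, ← hj, foldIdx_right]

lemma pairEquiv_symm_inl {n : ℕ} {ι : Type*} (p : (Fin n → ι) × (Fin n → ι)) (k : Fin n) :
    (pairEquiv n ι).symm p (halfEquiv n (.inl k)) = p.1 k := by
  show Sum.elim p.1 p.2 ((halfEquiv n).symm (halfEquiv n (.inl k))) = p.1 k
  rw [Equiv.symm_apply_apply, Sum.elim_inl]

lemma pairEquiv_symm_inr {n : ℕ} {ι : Type*} (p : (Fin n → ι) × (Fin n → ι)) (k : Fin n) :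
    (pairEquiv n ι).symm p (halfEquiv n (.inr k)) = p.2 k := by
  show Sum.elim p.1 p.2 ((halfEquiv n).symm (halfEquiv n (.inr k))) = p.2 k
  rw [Equiv.symm_apply_apply, Sum.elim_inr]

/-- A product over `Fin (2n)` splits along `halfEquiv`. -/
lemma prodSplit {n : ℕ} (F : Fin (2 * n) → ℝ) :
    ∏ j, F j = (∏ k : Fin n, F (halfEquiv n (.inl k))) * ∏ k : Fin n, F (halfEquiv n (.inr k)) := by
  rw [← Equiv.prod_comp (halfEquiv n) F, Fintype.prod_sum_type]

/-- Expansion of a vector in a `g`-orthonormal basis. -/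
lemma onb_expand {L : Type*} [AddCommGroup L] [Module ℝ L] {ι : Type*} [Fintype ι]
    [DecidableEq ι] (g : L →ₗ[ℝ] L →ₗ[ℝ] ℝ) (b : Module.Basis ι ℝ L)
    (hb : IsONBasis (fun x y => g x y) b) (x : L) :
    ∑ i, (g (b i) (b i) * g x (b i)) • b i = x := by
  have hb0 : ∀ i j, i ≠ j → g (b i) (b j) = 0 := hb.1
  have h1 : ∀ i, g (b i) (b i) * g x (b i) = b.repr x i := by
    intro i
    have h2 : g x (b i) = b.repr x i * g (b i) (b i) := by
      conv_lhs => rw [← b.sum_repr x]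
      rw [map_sum, LinearMap.sum_apply]
      rw [Finset.sum_eq_single i]
      · rw [map_smul, LinearMap.smul_apply, smul_eq_mul]
      · intro j _ hj
        rw [map_smul, LinearMap.smul_apply, smul_eq_mul, hb0 j i hj, mul_zero]
      · intro h; exact absurd (Finset.mem_univ i) h
    rw [h2]
    rcases hb.2 i with h | h
    · have h' : g (b i) (b i) = 1 := h
      rw [h']; ring
    · have h' : g (b i) (b i) = -1 := h
      rw [h']; ring
  simp_rw [h1]
  exact b.sum_repr x

/-- Contraction identity: `∑_j η_j g(c_j,x) g(c_j,y) = g(x,y)`. -/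
lemma onb_gsum {L : Type*} [AddCommGroup L] [Module ℝ L] {κ : Type*} [Fintype κ]
    [DecidableEq κ] (g : L →ₗ[ℝ] L →ₗ[ℝ] ℝ) (hsymm : ∀ x y, g x y = g y x)
    (c : Module.Basis κ ℝ L) (hc : IsONBasis (fun x y => g x y) c) (x y : L) :
    ∑ j, g (c j) (c j) * (g (c j) x * g (c j) y) = g x y := by
  conv_rhs => rw [← onb_expand g c hc x]
  rw [map_sum, LinearMap.sum_apply]
  refine Finset.sum_congr rfl fun j _ => ?_
  rw [map_smul, LinearMap.smul_apply, smul_eq_mul, hsymm (c j) x]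
  ring

/-- Key lemma: the `n`-fold contraction of a multilinear map along the "folded diagonal"
is independent of the choice of `g`-orthonormal basis. -/
lemma key_contraction {L : Type*} [AddCommGroup L] [Module ℝ L]
    (g : L →ₗ[ℝ] L →ₗ[ℝ] ℝ) (hsymm : ∀ x y, g x y = g y x)
    {ι κ : Type*} [Fintype ι] [Fintype κ]
    (b : Module.Basis ι ℝ L) (c : Module.Basis κ ℝ L)
    (hb : IsONBasis (fun x y => g x y) b) (hc : IsONBasis (fun x y => g x y) c)
    {n : ℕ} (T : MultilinearMap ℝ (fun _ : Fin (2 * n) => L) ℝ) :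
    ∑ f : Fin n → κ, (∏ k, g (c (f k)) (c (f k))) * T (fun j => c (f (foldIdx n j)))
      = ∑ f : Fin n → ι, (∏ k, g (b (f k)) (b (f k))) * T (fun j => b (f (foldIdx n j))) := by
  classical
  have hε2 : ∀ i, g (b i) (b i) * g (b i) (b i) = 1 := by
    intro i
    rcases hb.2 i with h | h
    · have h' : g (b i) (b i) = 1 := h
      rw [h']; norm_num
    · have h' : g (b i) (b i) = -1 := h
      rw [h']; norm_num
  have hb0 : ∀ i j, i ≠ j → g (b i) (b j) = 0 := hb.1
  have hgbb : ∀ i i' : ι, g (b i) (b i') = if i = i' then g (b i) (b i) else 0 := by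
    intro i i'
    by_cases h : i = i'
    · subst h; rw [if_pos rfl]
    · rw [if_neg h]; exact hb0 i i' h
  -- Step A: expand each `c`-vector in the `b`-basis.
  have stepA : ∀ f : Fin n → κ, T (fun j => c (f (foldIdx n j)))
      = ∑ q : Fin (2 * n) → ι,
          (∏ j, g (b (q j)) (b (q j)) * g (c (f (foldIdx n j))) (b (q j)))
            * T (fun j => b (q j)) := by
    intro f
    have h1 : (fun j : Fin (2 * n) => c (f (foldIdx n j)))
        = fun j => ∑ i : ι, (g (b i) (b i) * g (c (f (foldIdx n j))) (b i)) • b i := by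
      funext j; rw [onb_expand g b hb]
    rw [h1, T.map_sum]
    refine Finset.sum_congr rfl fun q _ => ?_
    rw [T.map_smul_univ, smul_eq_mul]
  -- Abbreviation for the coefficient appearing after contraction of the `f`-sum.
  set Φ : (Fin (2 * n) → ι) → ℝ := fun q =>
    (∏ j, g (b (q j)) (b (q j))) *
      (∏ k : Fin n, if q (halfEquiv n (.inl k)) = q (halfEquiv n (.inr k))
        then g (b (q (halfEquiv n (.inl k)))) (b (q (halfEquiv n (.inl k)))) else 0)
      * T (fun j => b (q j)) with hΦ
  have step1 :
      ∑ f : Fin n → κ, (∏ k, g (c (f k)) (c (f k))) * T (fun j => c (f (foldIdx n j)))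
        = ∑ q : Fin (2 * n) → ι, Φ q := by
    simp_rw [stepA, Finset.mul_sum]
    rw [Finset.sum_comm]
    refine Finset.sum_congr rfl fun q _ => ?_
    -- inner sum over f
    have hsplit : ∀ f : Fin n → κ,
        (∏ j, g (b (q j)) (b (q j)) * g (c (f (foldIdx n j))) (b (q j)))
          = (∏ j, g (b (q j)) (b (q j))) * ∏ j, g (c (f (foldIdx n j))) (b (q j)) :=
      fun f => Finset.prod_mul_distrib
    have hcore :
        ∑ f : Fin n → κ, (∏ k, g (c (f k)) (c (f k)))
            * ∏ j, g (c (f (foldIdx n j))) (b (q j))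
          = ∏ k : Fin n, g (b (q (halfEquiv n (.inl k)))) (b (q (halfEquiv n (.inr k)))) := by
      have h1 : ∀ f : Fin n → κ,
          (∏ k, g (c (f k)) (c (f k))) * ∏ j, g (c (f (foldIdx n j))) (b (q j))
            = ∏ k : Fin n, (g (c (f k)) (c (f k)) *
                (g (c (f k)) (b (q (halfEquiv n (.inl k))))
                  * g (c (f k)) (b (q (halfEquiv n (.inr k)))))) := by
        intro f
        rw [prodSplit (fun j => g (c (f (foldIdx n j))) (b (q j)))]
        simp_rw [foldIdx_left, foldIdx_right]
        rw [← Finset.prod_mul_distrib, ← Finset.prod_mul_distrib]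
      simp_rw [h1]
      rw [← Fintype.piFinset_univ]
      rw [Finset.sum_prod_piFinset Finset.univ (fun (k : Fin n) (j : κ) =>
        g (c j) (c j) * (g (c j) (b (q (halfEquiv n (.inl k))))
          * g (c j) (b (q (halfEquiv n (.inr k))))))]
      refine Finset.prod_congr rfl fun k _ => ?_
      exact onb_gsum g hsymm c hc _ _
    calc
      ∑ f : Fin n → κ, (∏ k, g (c (f k)) (c (f k))) *
            ((∏ j, g (b (q j)) (b (q j)) * g (c (f (foldIdx n j))) (b (q j)))
              * T (fun j => b (q j)))
          = (∑ f : Fin n → κ, (∏ k, g (c (f k)) (c (f k)))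
                * ∏ j, g (c (f (foldIdx n j))) (b (q j)))
              * ((∏ j, g (b (q j)) (b (q j))) * T (fun j => b (q j))) := by
            rw [Finset.sum_mul]
            refine Finset.sum_congr rfl fun f _ => ?_
            rw [hsplit f]; ring
      _ = Φ q := by
            rw [hcore, hΦ]
            have hd : (∏ k : Fin n, g (b (q (halfEquiv n (.inl k)))) (b (q (halfEquiv n (.inr k)))))
                = ∏ k : Fin n, if q (halfEquiv n (.inl k)) = q (halfEquiv n (.inr k))
                    then g (b (q (halfEquiv n (.inl k)))) (b (q (halfEquiv n (.inl k)))) else 0 := by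
              refine Finset.prod_congr rfl fun k _ => ?_
              by_cases h : q (halfEquiv n (.inl k)) = q (halfEquiv n (.inr k))
              · rw [if_pos h, ← h]
              · rw [if_neg h]; exact hb0 _ _ h
            rw [hd]
            ring
  rw [step1]
  -- Step C: reindex by pairs and collapse the diagonal.
  have step2 : ∑ q : Fin (2 * n) → ι, Φ q
      = ∑ p₁ : Fin n → ι, ∑ p₂ : Fin n → ι, Φ ((pairEquiv n ι).symm (p₁, p₂)) := by
    rw [Fintype.sum_equiv (pairEquiv n ι) Φ (fun p => Φ ((pairEquiv n ι).symm p))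
      (fun q => by simp only [Equiv.symm_apply_apply])]
    exact Fintype.sum_prod_type _
  rw [step2]
  refine Finset.sum_congr rfl fun p₁ _ => ?_
  rw [Finset.sum_eq_single p₁]
  · -- the diagonal term
    rw [hΦ]
    rw [pairEquiv_symm_diag p₁]
    beta_reduce
    have h1 : (∏ j, g (b (p₁ (foldIdx n j))) (b (p₁ (foldIdx n j)))) = 1 := by
      rw [prodSplit (fun j => g (b (p₁ (foldIdx n j))) (b (p₁ (foldIdx n j))))]
      simp_rw [foldIdx_left, foldIdx_right]
      rw [← Finset.prod_mul_distrib]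
      simp_rw [hε2]
      exact Finset.prod_const_one
    simp only [foldIdx_left, foldIdx_right, eq_self_iff_true, if_true]
    rw [h1, one_mul]
  · intro p₂ _ hne
    obtain ⟨k, hk⟩ : ∃ k, p₂ k ≠ p₁ k := Function.ne_iff.mp hne
    rw [hΦ]
    beta_reduce
    rw [Finset.prod_eq_zero (Finset.mem_univ k), mul_zero, zero_mul]
    rw [pairEquiv_symm_inl, pairEquiv_symm_inr]
    exact if_neg fun h => hk h.symm
  · intro h; exact absurd (Finset.mem_univ p₁) h

/-- The multilinear map `x ↦ σ(x₁,…,x_n, u x_{n+1}, …, u x_{2n})`. -/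
noncomputable def ampT {L : Type*} [AddCommGroup L] [Module ℝ L] (u : L →ₗ[ℝ] L) {n : ℕ}
    (σ : AlternatingMap ℝ L ℝ (Fin (2 * n))) : MultilinearMap ℝ (fun _ : Fin (2 * n) => L) ℝ :=
  σ.toMultilinearMap.compLinearMap (fun j => if (j : ℕ) < n then LinearMap.id else u)

lemma ampT_apply {L : Type*} [AddCommGroup L] [Module ℝ L] (u : L →ₗ[ℝ] L) {n : ℕ}
    (σ : AlternatingMap ℝ L ℝ (Fin (2 * n))) {μ : Type*} (d : μ → L) (f : Fin n → μ) :
    σ (ampVec d (fun x => u x) f) = ampT u σ (fun j => d (f (foldIdx n j))) := by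
  rw [ampT, MultilinearMap.compLinearMap_apply]
  show σ _ = σ _
  congr 1
  funext j
  by_cases h : (j : ℕ) < n
  · simp only [ampVec, dif_pos h, if_pos h, LinearMap.id_coe, id_eq]
    congr 2
    ext
    simp only [foldIdx]
    rw [if_pos h]
  · simp only [ampVec, dif_neg h, if_neg h]
    congr 3
    ext
    simp only [foldIdx]
    rw [if_neg h]

/-- For a finite-dimensional real vector space `L` with nondegenerate
symmetric bilinear form `g`, a linear map `u : L → L` and an alternating `2n`-form `σ`,
the amplitude `A_{g,u}(σ)` is independent of the choice of `g`-orthonormal basis. -/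
theorem stmt12 {L : Type*} [AddCommGroup L] [Module ℝ L] [FiniteDimensional ℝ L]
    (g : L →ₗ[ℝ] L →ₗ[ℝ] ℝ)
    (hsymm : ∀ x y, g x y = g y x)
    (hnondeg : ∀ x, (∀ y, g x y = 0) → x = 0)
    (u : L →ₗ[ℝ] L)
    {n : ℕ} (σ : AlternatingMap ℝ L ℝ (Fin (2 * n)))
    {ι κ : Type*} [Fintype ι] [Fintype κ]
    (b : Module.Basis ι ℝ L) (c : Module.Basis κ ℝ L)
    (hb : IsONBasis (fun x y => g x y) b) (hc : IsONBasis (fun x y => g x y) c) :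
    amp (fun x y => g x y) (fun x => u x) b σ =
      amp (fun x y => g x y) (fun x => u x) c σ := by
  unfold amp
  congr 1
  simp only
  simp_rw [ampT_apply u σ]
  exact (key_contraction g hsymm b c hb hc (ampT u σ)).symm
end

section
/- Let L be a finite-dimensional real vector space with a nondegenerate symmetric bilinear form g, and for an alternating n-form σ on L let σ_rev denote the alternating n-form σ_rev(ξ₁,…,ξ_n) := σ(ξ_n,…,ξ₁). Then for all alternating n-forms σ', σ on L, the Fock pairing of σ'_rev and σ_rev computed with respect to the negated form −g equals (−1)ⁿ times the Fock pairing of σ' and σ computed with respect to g; that is, (g')_n(σ'_rev, σ_rev) = (−1)ⁿ g_n(σ', σ) where g' = −g. -/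
open scoped BigOperators

/-- For a finite-dimensional real vector space `L` with nondegenerate
symmetric bilinear form `g`, and argument-reversed forms `σ_rev(ξ₁,…,ξ_n) = σ(ξ_n,…,ξ₁)`,
the Fock pairing of `σ'_rev` and `σ_rev` with respect to the negated form `−g` equals
`(−1)ⁿ` times the Fock pairing of `σ'` and `σ` with respect to `g`. -/
theorem stmt13 {L : Type*} [AddCommGroup L] [Module ℝ L] [FiniteDimensional ℝ L]
    (g : L →ₗ[ℝ] L →ₗ[ℝ] ℝ)
    (hsymm : ∀ x y, g x y = g y x)
    (hnondeg : ∀ x, (∀ y, g x y = 0) → x = 0)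
    {n : ℕ} (σ' σ σ'rev σrev : AlternatingMap ℝ L ℝ (Fin n))
    (hσ'rev : ∀ v : Fin n → L, σ'rev v = σ' (fun k => v k.rev))
    (hσrev : ∀ v : Fin n → L, σrev v = σ (fun k => v k.rev))
    {ι : Type*} [Fintype ι]
    (b : Module.Basis ι ℝ L) (hb : IsONBasis (fun x y => g x y) b) :
    fockPair (fun x y => -(g x y)) b σ'rev σrev =
      (-1 : ℝ) ^ n * fockPair (fun x y => g x y) b σ' σ := by
  unfold fockPair
  have key : ∑ f : Fin n → ι,
      (∏ k, -(g (b (f k)) (b (f k)))) *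
        (σ'rev (fun k => b (f k)) * σrev (fun k => b (f k))) =
      (-1:ℝ)^n * ∑ f : Fin n → ι,
      (∏ k, g (b (f k)) (b (f k))) *
        (σ' (fun k => b (f k)) * σ (fun k => b (f k))) := by
    rw [Finset.mul_sum]
    apply Fintype.sum_equiv (Equiv.arrowCongr Fin.revPerm (Equiv.refl ι))
    intro f
    simp only [Equiv.arrowCongr_apply, Equiv.coe_refl, Function.comp_def, id_eq,
      Fin.revPerm_symm, Fin.revPerm_apply]
    rw [hσ'rev, hσrev]
    have h1 : (∏ k : Fin n, g (b (f k.rev)) (b (f k.rev)))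
        = ∏ k : Fin n, g (b (f k)) (b (f k)) :=
      Equiv.prod_comp Fin.revPerm (fun k => g (b (f k)) (b (f k)))
    rw [h1]
    have h2 : (∏ k : Fin n, -(g (b (f k)) (b (f k))))
        = (-1:ℝ)^n * ∏ k : Fin n, g (b (f k)) (b (f k)) := by
      calc ∏ k : Fin n, -(g (b (f k)) (b (f k)))
          = ∏ k : Fin n, (-1:ℝ) * g (b (f k)) (b (f k)) := by
            exact Finset.prod_congr rfl (fun k _ => by ring)
        _ = (-1:ℝ)^n * ∏ k : Fin n, g (b (f k)) (b (f k)) := by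
            rw [Finset.prod_mul_distrib, Finset.prod_const, Finset.card_univ,
              Fintype.card_fin]
    rw [h2]
    ring
  rw [key]
  ring
end

section
/- Let L be a finite-dimensional real vector space with a nondegenerate symmetric bilinear form g. Let V = L × L carry the form G((x,y),(x',y')) = −g(x,x') + g(y,y'), and let u : V → V be the swap map u(x,y) = (y,x). For an alternating n-form σ on L let σ_rev(ξ₁,…,ξ_n) := σ(ξ_n,…,ξ₁). Then for all alternating n-forms σ, σ' on L, the amplitude of the antisymmetrized product satisfies A_{G,u}(τ*(σ_rev ⊗ σ')) = g_n(σ, σ'); that is, the slice-region probability map reproduces the Fock pairing. -/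
open scoped BigOperators

section Aux

variable {V : Type*} [AddCommGroup V] [Module ℝ V]
variable {W : Type*} [AddCommGroup W] [Module ℝ W]

set_option linter.unusedSectionVars false

/-- The paired-diagonal vector: slot `j` and slot `2m-1-j` both get `c (f k)`. -/
noncomputable def pairDiag {κ : Type*} (c : κ → V) {m : ℕ} (f : Fin m → κ) :
    Fin (2 * m) → V := fun j =>
  if h : (j : ℕ) < m then c (f ⟨j, h⟩)
  else c (f ⟨2 * m - 1 - j, by have := j.isLt; omega⟩)

lemma onb_expand_s15 {κ : Type*} [Fintype κ] (B : V →ₗ[ℝ] V →ₗ[ℝ] ℝ) (c : Module.Basis κ ℝ V)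
    (h0 : ∀ i j, i ≠ j → B (c i) (c j) = 0)
    (h1 : ∀ i, B (c i) (c i) = 1 ∨ B (c i) (c i) = -1) (x : V) :
    ∑ i, (B (c i) (c i) * B x (c i)) • c i = x := by
  have hBx : ∀ i, B x (c i) = c.repr x i * B (c i) (c i) := by
    intro i
    conv_lhs => rw [← c.sum_repr x]
    rw [map_sum, LinearMap.sum_apply]
    rw [Finset.sum_eq_single i]
    · simp
    · intro j _ hj
      simp [h0 j i hj]
    · intro h; exact absurd (Finset.mem_univ i) h
  have h : ∀ i, (B (c i) (c i) * B x (c i)) • c i = c.repr x i • c i := by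
    intro i
    rw [hBx i]
    rcases h1 i with h | h <;> rw [h] <;> ring_nf
  rw [Finset.sum_congr rfl fun i _ => h i]
  exact c.sum_repr x

lemma pair_indep {κ κ' : Type*} [Fintype κ] [Fintype κ']
    (B : V →ₗ[ℝ] V →ₗ[ℝ] ℝ) (hBs : ∀ x y, B x y = B y x)
    (c : Module.Basis κ ℝ V)
    (hc0 : ∀ i j, i ≠ j → B (c i) (c j) = 0)
    (hc1 : ∀ i, B (c i) (c i) = 1 ∨ B (c i) (c i) = -1)
    (c' : Module.Basis κ' ℝ V)
    (hc'0 : ∀ i j, i ≠ j → B (c' i) (c' j) = 0)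
    (hc'1 : ∀ i, B (c' i) (c' i) = 1 ∨ B (c' i) (c' i) = -1)
    (F : V →ₗ[ℝ] V →ₗ[ℝ] W) :
    ∑ i, B (c i) (c i) • F (c i) (c i) = ∑ j, B (c' j) (c' j) • F (c' j) (c' j) := by
  have hL : ∀ i, F (c i) (c i)
      = ∑ j, (B (c' j) (c' j) * B (c i) (c' j)) • F (c i) (c' j) := by
    intro i
    have h1 : F (c i) (c i)
        = F (c i) (∑ j, (B (c' j) (c' j) * B (c i) (c' j)) • c' j) :=
      congrArg (F (c i)) (onb_expand_s15 B c' hc'0 hc'1 (c i)).symm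
    rw [h1, map_sum]
    exact Finset.sum_congr rfl fun j _ => by rw [map_smul]
  have hR : ∀ j, F (c' j) (c' j)
      = ∑ i, (B (c i) (c i) * B (c' j) (c i)) • F (c i) (c' j) := by
    intro j
    have h1 : F (c' j) (c' j)
        = F (∑ i, (B (c i) (c i) * B (c' j) (c i)) • c i) (c' j) :=
      congrArg (fun x => F x (c' j)) (onb_expand_s15 B c hc0 hc1 (c' j)).symm
    rw [h1, map_sum, LinearMap.sum_apply]
    exact Finset.sum_congr rfl fun i _ => by rw [map_smul, LinearMap.smul_apply]
  calc ∑ i, B (c i) (c i) • F (c i) (c i)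
      = ∑ i, ∑ j, (B (c i) (c i) * (B (c' j) (c' j) * B (c i) (c' j))) •
          F (c i) (c' j) := by
        refine Finset.sum_congr rfl fun i _ => ?_
        rw [hL i, Finset.smul_sum]
        exact Finset.sum_congr rfl fun j _ => by rw [smul_smul]
    _ = ∑ j, ∑ i, (B (c' j) (c' j) * (B (c i) (c i) * B (c' j) (c i))) •
          F (c i) (c' j) := by
        rw [Finset.sum_comm]
        refine Finset.sum_congr rfl fun j _ => Finset.sum_congr rfl fun i _ => ?_
        rw [hBs (c' j) (c i)]
        ring_nf
    _ = ∑ j, B (c' j) (c' j) • F (c' j) (c' j) := by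
        refine Finset.sum_congr rfl fun j _ => ?_
        rw [hR j, Finset.smul_sum]
        exact Finset.sum_congr rfl fun i _ => by rw [smul_smul]

/-- Insert `x` at slot `0` and `y` at slot `2m+1` around a `2m`-vector. -/
noncomputable def insV {m : ℕ} (x y : V) (v : Fin (2 * m) → V) :
    Fin (2 * (m + 1)) → V := fun j =>
  if _ : (j : ℕ) = 0 then x
  else if _ : (j : ℕ) = 2 * m + 1 then y
  else v ⟨(j : ℕ) - 1, by have := j.isLt; omega⟩

lemma insV_update {m : ℕ} (x y : V) (v : Fin (2 * m) → V) [inst : DecidableEq (Fin (2 * m))]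
    (k : Fin (2 * m)) (z : V) :
    insV x y (Function.update v k z)
      = Function.update (insV x y v) ⟨(k : ℕ) + 1, by have := k.isLt; omega⟩ z := by
  funext j
  have hk := k.isLt
  have hj := j.isLt
  simp only [insV, Function.update_apply, Fin.ext_iff]
  split_ifs <;> first | rfl | omega | (exfalso; omega)

lemma insV_left {m : ℕ} (x x' y : V) (v : Fin (2 * m) → V) :
    insV x' y v = Function.update (insV x y v) ⟨0, by omega⟩ x' := by
  funext j
  simp only [insV, Function.update_apply, Fin.ext_iff]
  split_ifs <;> first | rfl | omega | (exfalso; omega)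

lemma insV_right {m : ℕ} (x y y' : V) (v : Fin (2 * m) → V) :
    insV x y' v = Function.update (insV x y v) ⟨2 * m + 1, by omega⟩ y' := by
  funext j
  simp only [insV, Function.update_apply, Fin.ext_iff]
  split_ifs <;> first | rfl | omega | (exfalso; omega)

/-- `M` with slots `0` and `2m+1` fixed, as a multilinear map in the rest. -/
noncomputable def fixPair {m : ℕ}
    (M : MultilinearMap ℝ (fun _ : Fin (2 * (m + 1)) => V) W) (x y : V) :
    MultilinearMap ℝ (fun _ : Fin (2 * m) => V) W where
  toFun v := M (insV x y v)
  map_update_add' v k a a' := by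
    rw [insV_update, insV_update, insV_update, M.map_update_add]
  map_update_smul' v k r a := by
    rw [insV_update, insV_update, M.map_update_smul]

lemma fixPair_apply {m : ℕ}
    (M : MultilinearMap ℝ (fun _ : Fin (2 * (m + 1)) => V) W) (x y : V)
    (v : Fin (2 * m) → V) : fixPair M x y v = M (insV x y v) := rfl

/-- The bilinear map `x y ↦ M (insV x y v)` for fixed `v`. -/
noncomputable def fixBil {m : ℕ}
    (M : MultilinearMap ℝ (fun _ : Fin (2 * (m + 1)) => V) W)
    (v : Fin (2 * m) → V) : V →ₗ[ℝ] V →ₗ[ℝ] W :=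
  LinearMap.mk₂ ℝ (fun x y => M (insV x y v))
    (fun x x' y => by
      rw [insV_left x x y v, insV_left x x' y v, insV_left x (x + x') y v,
        M.map_update_add])
    (fun r x y => by
      rw [insV_left x x y v, insV_left x (r • x) y v, M.map_update_smul])
    (fun x y y' => by
      rw [insV_right x y y v, insV_right x y y' v, insV_right x y (y + y') v,
        M.map_update_add])
    (fun r x y => by
      rw [insV_right x y y v, insV_right x y (r • y) v, M.map_update_smul])

lemma fixBil_apply {m : ℕ}
    (M : MultilinearMap ℝ (fun _ : Fin (2 * (m + 1)) => V) W)
    (v : Fin (2 * m) → V) (x y : V) : fixBil M v x y = M (insV x y v) := rfl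

lemma pairDiag_cons {κ : Type*} (c : κ → V) {m : ℕ} (i : κ) (f₀ : Fin m → κ) :
    pairDiag c (Fin.cons i f₀) = insV (c i) (c i) (pairDiag c f₀) := by
  funext j
  have hj := j.isLt
  simp only [pairDiag, insV]
  by_cases h0 : (j : ℕ) = 0
  · rw [dif_pos h0, dif_pos (by omega : (j : ℕ) < m + 1)]
    have h : (⟨(j : ℕ), by omega⟩ : Fin (m + 1)) = 0 := by simp [Fin.ext_iff, h0]
    rw [h, Fin.cons_zero]
  · rw [dif_neg h0]
    by_cases hl : (j : ℕ) = 2 * m + 1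
    · rw [dif_pos hl, dif_neg (by omega : ¬ (j : ℕ) < m + 1)]
      have h : (⟨2 * (m + 1) - 1 - (j : ℕ), by omega⟩ : Fin (m + 1)) = 0 := by
        simp [Fin.ext_iff]; omega
      rw [h, Fin.cons_zero]
    · rw [dif_neg hl]
      by_cases hlow : (j : ℕ) < m + 1
      · rw [dif_pos hlow, dif_pos (by omega : (j : ℕ) - 1 < m)]
        have h : (⟨(j : ℕ), hlow⟩ : Fin (m + 1))
            = Fin.succ ⟨(j : ℕ) - 1, by omega⟩ := by simp [Fin.ext_iff]; omega
        rw [h, Fin.cons_succ]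
      · rw [dif_neg hlow, dif_neg (by omega : ¬ (j : ℕ) - 1 < m)]
        have h : (⟨2 * (m + 1) - 1 - (j : ℕ), by omega⟩ : Fin (m + 1))
            = Fin.succ ⟨2 * m - 1 - ((j : ℕ) - 1), by omega⟩ := by
          simp [Fin.ext_iff]; omega
        rw [h, Fin.cons_succ]

lemma swap_smul_sum {I J : Type*} [Fintype I] [Fintype J]
    (a : I → ℝ) (w : J → ℝ) (X : I → J → W) :
    ∑ i, a i • ∑ j, w j • X i j = ∑ j, w j • ∑ i, a i • X i j := by
  simp only [Finset.smul_sum]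
  rw [Finset.sum_comm]
  exact Finset.sum_congr rfl fun j _ => Finset.sum_congr rfl fun i _ =>
    smul_comm _ _ _

lemma key_step {κ : Type*} [Fintype κ] (B : V →ₗ[ℝ] V →ₗ[ℝ] ℝ) {m : ℕ}
    (M : MultilinearMap ℝ (fun _ : Fin (2 * (m + 1)) => V) W) (c : κ → V) :
    ∑ f : Fin (m + 1) → κ, (∏ k, B (c (f k)) (c (f k))) • M (pairDiag c f)
      = ∑ i : κ, B (c i) (c i) •
          ∑ f₀ : Fin m → κ, (∏ k, B (c (f₀ k)) (c (f₀ k))) •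
            M (insV (c i) (c i) (pairDiag c f₀)) := by
  rw [← Fintype.sum_equiv (Fin.consEquiv (fun _ : Fin (m + 1) => κ))
    (fun p => (∏ k, B (c ((Fin.cons p.1 p.2 : Fin (m+1) → κ) k))
        (c ((Fin.cons p.1 p.2 : Fin (m+1) → κ) k))) •
      M (pairDiag c (Fin.cons p.1 p.2)))
    (fun f => (∏ k, B (c (f k)) (c (f k))) • M (pairDiag c f))
    (fun p => rfl)]
  rw [Fintype.sum_prod_type]
  refine Finset.sum_congr rfl fun i _ => ?_
  rw [Finset.smul_sum]
  refine Finset.sum_congr rfl fun f₀ _ => ?_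
  rw [pairDiag_cons, Fin.prod_univ_succ, Fin.cons_zero, mul_smul]
  have hp : (∏ k : Fin m, B (c ((Fin.cons i f₀ : Fin (m+1) → κ) k.succ))
        (c ((Fin.cons i f₀ : Fin (m+1) → κ) k.succ)))
      = ∏ k : Fin m, B (c (f₀ k)) (c (f₀ k)) :=
    Finset.prod_congr rfl fun k _ => by rw [Fin.cons_succ]
  rw [hp]

lemma master {κ κ' : Type*} [Fintype κ] [Fintype κ']
    (B : V →ₗ[ℝ] V →ₗ[ℝ] ℝ) (hBs : ∀ x y, B x y = B y x)
    (c : Module.Basis κ ℝ V)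
    (hc0 : ∀ i j, i ≠ j → B (c i) (c j) = 0)
    (hc1 : ∀ i, B (c i) (c i) = 1 ∨ B (c i) (c i) = -1)
    (c' : Module.Basis κ' ℝ V)
    (hc'0 : ∀ i j, i ≠ j → B (c' i) (c' j) = 0)
    (hc'1 : ∀ i, B (c' i) (c' i) = 1 ∨ B (c' i) (c' i) = -1) :
    ∀ (m : ℕ) (M : MultilinearMap ℝ (fun _ : Fin (2 * m) => V) W),
    ∑ f : Fin m → κ, (∏ k, B (c (f k)) (c (f k))) • M (pairDiag c f)
      = ∑ f : Fin m → κ', (∏ k, B (c' (f k)) (c' (f k))) • M (pairDiag c' f) := by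
  intro m
  induction m with
  | zero =>
    intro M
    rw [Fintype.sum_unique, Fintype.sum_unique]
    have h1 : (∏ k : Fin 0, B (c ((default : Fin 0 → κ) k))
        (c ((default : Fin 0 → κ) k))) = 1 := Finset.prod_of_isEmpty _
    have h2 : (∏ k : Fin 0, B (c' ((default : Fin 0 → κ') k))
        (c' ((default : Fin 0 → κ') k))) = 1 := Finset.prod_of_isEmpty _
    rw [h1, h2]
    have h3 : pairDiag (⇑c) (default : Fin 0 → κ)
        = pairDiag (⇑c') (default : Fin 0 → κ') :=
      funext fun j => absurd j.isLt (by omega)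
    rw [h3]
  | succ m ih =>
    intro M
    rw [key_step B M c, key_step B M c']
    calc ∑ i : κ, B (c i) (c i) •
          ∑ f₀ : Fin m → κ, (∏ k, B (c (f₀ k)) (c (f₀ k))) •
            M (insV (c i) (c i) (pairDiag c f₀))
        = ∑ i : κ, B (c i) (c i) •
            ∑ f₀ : Fin m → κ', (∏ k, B (c' (f₀ k)) (c' (f₀ k))) •
              M (insV (c i) (c i) (pairDiag c' f₀)) := by
          refine Finset.sum_congr rfl fun i _ => ?_
          congr 1
          exact ih (fixPair M (c i) (c i))
      _ = ∑ f₀ : Fin m → κ', (∏ k, B (c' (f₀ k)) (c' (f₀ k))) •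
            ∑ i : κ, B (c i) (c i) • M (insV (c i) (c i) (pairDiag c' f₀)) :=
          swap_smul_sum _ _ _
      _ = ∑ f₀ : Fin m → κ', (∏ k, B (c' (f₀ k)) (c' (f₀ k))) •
            ∑ j : κ', B (c' j) (c' j) • M (insV (c' j) (c' j) (pairDiag c' f₀)) := by
          refine Finset.sum_congr rfl fun f₀ _ => ?_
          congr 1
          exact pair_indep B hBs c hc0 hc1 c' hc'0 hc'1 (fixBil M (pairDiag c' f₀))
      _ = ∑ j : κ', B (c' j) (c' j) •
            ∑ f₀ : Fin m → κ', (∏ k, B (c' (f₀ k)) (c' (f₀ k))) •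
              M (insV (c' j) (c' j) (pairDiag c' f₀)) :=
          (swap_smul_sum _ _ _).symm

end Aux


namespace Stmt15Aux

variable {n : ℕ}

def lowI (k : Fin n) : Fin (2 * n) := ⟨k, by have := k.isLt; omega⟩
def upI (k : Fin n) : Fin (2 * n) := ⟨n + k, by have := k.isLt; omega⟩
def rv (j : Fin (2 * n)) : Fin (2 * n) := ⟨2 * n - 1 - j, by have := j.isLt; omega⟩
def pairOf (j : Fin (2 * n)) : Fin n :=
  if h : (j : ℕ) < n then ⟨j, h⟩ else ⟨2 * n - 1 - j, by have := j.isLt; omega⟩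

lemma lowI_injective : Function.Injective (lowI (n := n)) := by
  intro a b h
  simpa [lowI, Fin.ext_iff] using h

lemma upI_injective : Function.Injective (upI (n := n)) := by
  intro a b h
  simpa [upI, Fin.ext_iff] using h

lemma rv_rv (j : Fin (2 * n)) : rv (rv j) = j := by
  have := j.isLt
  simp only [rv, Fin.ext_iff]
  omega

lemma pairOf_rv (j : Fin (2 * n)) : pairOf (rv j) = pairOf j := by
  have := j.isLt
  have hr : ((rv j : Fin (2 * n)) : ℕ) = 2 * n - 1 - j := rfl
  apply Fin.ext
  unfold pairOf
  split_ifs <;> simp only [Fin.val_mk] <;> omega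

lemma pairOf_lowI (k : Fin n) : pairOf (lowI k) = k := by
  have := k.isLt
  unfold pairOf
  rw [dif_pos (show ((lowI k : Fin (2 * n)) : ℕ) < n from this)]
  rfl

lemma pairOf_rvlow (k : Fin n) : pairOf (rv (lowI k)) = k := by
  rw [pairOf_rv, pairOf_lowI]

lemma lowI_or (j : Fin (2 * n)) :
    j = lowI (pairOf j) ∨ j = rv (lowI (pairOf j)) := by
  have := j.isLt
  by_cases h : (j : ℕ) < n
  · left
    simp only [pairOf, lowI, Fin.ext_iff]
    rw [dif_pos h]
  · right
    simp only [pairOf, lowI, rv, Fin.ext_iff]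
    rw [dif_neg h]
    simp
    omega

lemma lowI_ne_rvlow (k : Fin n) : lowI k ≠ rv (lowI k) := by
  have := k.isLt
  simp only [lowI, rv, Fin.ext_iff, ne_eq]
  omega

def flipFun (S : Finset (Fin n)) : Fin (2 * n) → Fin (2 * n) := fun j =>
  if pairOf j ∈ S then rv j else j

lemma flipFun_inv (S : Finset (Fin n)) : Function.Involutive (flipFun S) := by
  intro j
  unfold flipFun
  by_cases h : pairOf j ∈ S
  · rw [if_pos h, if_pos (by rw [pairOf_rv]; exact h), rv_rv]
  · rw [if_neg h, if_neg h]

def flipSet (S : Finset (Fin n)) : Equiv.Perm (Fin (2 * n)) :=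
  Function.Involutive.toPerm (flipFun S) (flipFun_inv S)

lemma flipSet_apply (S : Finset (Fin n)) (j : Fin (2 * n)) :
    flipSet S j = if pairOf j ∈ S then rv j else j := rfl

lemma flipSet_empty : flipSet (∅ : Finset (Fin n)) = 1 :=
  Equiv.ext fun j => by simp [flipSet_apply]

lemma flipSet_insert (a : Fin n) (S : Finset (Fin n)) (ha : a ∉ S) :
    flipSet (insert a S) = Equiv.swap (lowI a) (rv (lowI a)) * flipSet S := by
  apply Equiv.ext; intro j
  rw [Equiv.Perm.mul_apply]
  by_cases h1 : pairOf j = a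
  · have hjS : pairOf j ∉ S := by rw [h1]; exact ha
    rw [flipSet_apply, if_pos (by rw [Finset.mem_insert]; left; exact h1),
      flipSet_apply, if_neg hjS]
    rcases lowI_or j with h | h
    · have hj : j = lowI a := by rw [h, h1]
      rw [hj, Equiv.swap_apply_left]
    · have hj : j = rv (lowI a) := by rw [h, h1]
      rw [hj, Equiv.swap_apply_right, rv_rv]
  · rw [flipSet_apply, flipSet_apply]
    by_cases h2 : pairOf j ∈ S
    · rw [if_pos (Finset.mem_insert_of_mem h2), if_pos h2]
      refine (Equiv.swap_apply_of_ne_of_ne ?_ ?_).symm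
      · intro hc
        exact h1 (by rw [← pairOf_rv j, hc, pairOf_lowI])
      · intro hc
        exact h1 (by rw [← pairOf_rv j, hc, pairOf_rvlow])
    · rw [if_neg (by simp [Finset.mem_insert, h1, h2]), if_neg h2]
      refine (Equiv.swap_apply_of_ne_of_ne ?_ ?_).symm
      · intro hc
        exact h1 (by rw [hc, pairOf_lowI])
      · intro hc
        exact h1 (by rw [hc, pairOf_rvlow])

lemma sign_flipSet (S : Finset (Fin n)) :
    Equiv.Perm.sign (flipSet S) = (-1) ^ S.card := by
  induction S using Finset.induction_on with
  | empty => simp [flipSet_empty]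
  | @insert a S ha ih =>
    rw [flipSet_insert a S ha, map_mul, ih,
      Equiv.Perm.sign_swap (lowI_ne_rvlow a), Finset.card_insert_of_notMem ha,
      pow_succ, mul_comm]

def EE : (Fin n) ⊕ (Fin n) ≃ Fin (2 * n) :=
  finSumFinEquiv.trans (finCongr (two_mul n).symm)

lemma EE_inl (k : Fin n) : EE (Sum.inl k) = lowI k := by
  simp [EE, lowI, Fin.ext_iff]

lemma EE_inr (k : Fin n) : EE (Sum.inr k) = upI k := by
  simp [EE, upI, Fin.ext_iff]
  omega

def DPerm (n : ℕ) : Equiv.Perm (Fin (2 * n)) :=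
  (EE (n := n)).permCongr (Equiv.sumCongr (Equiv.refl (Fin n)) Fin.revPerm)

lemma DPerm_low (k : Fin n) : DPerm n (lowI k) = lowI k := by
  have hsymm : (EE (n := n)).symm (lowI k) = Sum.inl k := by
    rw [← EE_inl]; exact EE.symm_apply_apply _
  rw [DPerm, Equiv.permCongr_apply, hsymm]
  simp [EE_inl]

lemma DPerm_up (k : Fin n) : DPerm n (upI k) = rv (lowI k) := by
  have hsymm : (EE (n := n)).symm (upI k) = Sum.inr k := by
    rw [← EE_inr]; exact EE.symm_apply_apply _
  rw [DPerm, Equiv.permCongr_apply, hsymm]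
  simp only [Equiv.sumCongr_apply, Sum.map_inr, EE_inr]
  have := k.isLt
  simp only [upI, rv, lowI, Fin.ext_iff, Fin.revPerm_apply, Fin.rev]
  omega

lemma sign_DPerm : Equiv.Perm.sign (DPerm n)
    = Equiv.Perm.sign (Fin.revPerm : Equiv.Perm (Fin n)) := by
  rw [DPerm, Equiv.Perm.sign_permCongr, Equiv.Perm.sign_sumCongr,
    Equiv.Perm.sign_refl, one_mul]

def BP (α β : Equiv.Perm (Fin n)) : Equiv.Perm (Fin (2 * n)) :=
  (EE (n := n)).permCongr (Equiv.sumCongr α β)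

lemma BP_low (α β : Equiv.Perm (Fin n)) (k : Fin n) :
    BP α β (lowI k) = lowI (α k) := by
  have hsymm : (EE (n := n)).symm (lowI k) = Sum.inl k := by
    rw [← EE_inl]; exact EE.symm_apply_apply _
  rw [BP, Equiv.permCongr_apply, hsymm]
  simp [EE_inl]

lemma BP_up (α β : Equiv.Perm (Fin n)) (k : Fin n) :
    BP α β (upI k) = upI (β k) := by
  have hsymm : (EE (n := n)).symm (upI k) = Sum.inr k := by
    rw [← EE_inr]; exact EE.symm_apply_apply _
  rw [BP, Equiv.permCongr_apply, hsymm]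
  simp [EE_inr]

lemma sign_BP (α β : Equiv.Perm (Fin n)) :
    Equiv.Perm.sign (BP α β) = Equiv.Perm.sign α * Equiv.Perm.sign β := by
  rw [BP, Equiv.Perm.sign_permCongr, Equiv.Perm.sign_sumCongr]

def JP (S : Finset (Fin n)) (α β : Equiv.Perm (Fin n)) : Equiv.Perm (Fin (2 * n)) :=
  flipSet S * (DPerm n * BP α β)

lemma JP_low (S : Finset (Fin n)) (α β : Equiv.Perm (Fin n)) (k : Fin n) :
    JP S α β (lowI k) = flipSet S (lowI (α k)) := by
  rw [JP, Equiv.Perm.mul_apply, Equiv.Perm.mul_apply, BP_low, DPerm_low]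

lemma JP_up (S : Finset (Fin n)) (α β : Equiv.Perm (Fin n)) (k : Fin n) :
    JP S α β (upI k) = flipSet S (rv (lowI (β k))) := by
  rw [JP, Equiv.Perm.mul_apply, Equiv.Perm.mul_apply, BP_up, DPerm_up]

lemma sign_JP (S : Finset (Fin n)) (α β : Equiv.Perm (Fin n)) :
    Equiv.Perm.sign (JP S α β) = (-1) ^ S.card *
      (Equiv.Perm.sign (Fin.revPerm : Equiv.Perm (Fin n)) *
        (Equiv.Perm.sign α * Equiv.Perm.sign β)) := by
  rw [JP, map_mul, map_mul, sign_flipSet, sign_DPerm, sign_BP]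

lemma JP_injective (S : Finset (Fin n)) :
    Function.Injective (fun ab : Equiv.Perm (Fin n) × Equiv.Perm (Fin n) =>
      JP S ab.1 ab.2) := by
  intro ⟨α, β⟩ ⟨α', β'⟩ h
  simp only at h
  have hα : α = α' := by
    apply Equiv.ext; intro k
    have h1 : JP S α β (lowI k) = JP S α' β' (lowI k) := by rw [h]
    rw [JP_low, JP_low] at h1
    exact lowI_injective ((flipSet S).injective h1)
  have hβ : β = β' := by
    apply Equiv.ext; intro k
    have h1 : JP S α β (upI k) = JP S α' β' (upI k) := by rw [h]
    rw [JP_up, JP_up] at h1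
    have := (flipSet S).injective h1
    have h2 : lowI (β k) = lowI (β' k) := by
      have hrr := congrArg rv this
      rwa [rv_rv, rv_rv] at hrr
    exact lowI_injective h2
  rw [hα, hβ]

end Stmt15Aux

section TauComp

open Stmt15Aux

variable {L : Type*} [AddCommGroup L] [Module ℝ L]

lemma ampVec_low {ι : Type*} (bb : ι → L × L) (u : L × L → L × L) {n : ℕ}
    (f : Fin n → ι) (j : Fin (2 * n)) (k : Fin n)
    (h1 : (j : ℕ) < n) (h2 : (j : ℕ) = (k : ℕ)) :
    ampVec bb u f j = bb (f k) := by
  simp only [ampVec]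
  rw [dif_pos h1]
  exact congrArg (fun kk : Fin n => bb (f kk)) (Fin.ext h2)

lemma ampVec_high {ι : Type*} (bb : ι → L × L) (u : L × L → L × L) {n : ℕ}
    (f : Fin n → ι) (j : Fin (2 * n)) (k : Fin n)
    (h1 : ¬ (j : ℕ) < n) (h2 : 2 * n - 1 - (j : ℕ) = (k : ℕ)) :
    ampVec bb u f j = u (bb (f k)) := by
  simp only [ampVec]
  rw [dif_neg h1]
  exact congrArg (fun kk : Fin n => u (bb (f kk))) (Fin.ext h2)

lemma M_pairDiag {n : ℕ} (τ : AlternatingMap ℝ (L × L) ℝ (Fin (2 * n)))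
    {κ : Type*} (d : κ → L × L) (f : Fin n → κ) :
    (τ.toMultilinearMap.compLinearMap (fun j : Fin (2 * n) =>
        if (j : ℕ) < n then (LinearMap.id : (L × L) →ₗ[ℝ] (L × L))
        else (LinearMap.snd ℝ L L).prod (LinearMap.fst ℝ L L))) (pairDiag d f)
      = τ (ampVec d (fun p => (p.2, p.1)) f) := by
  rw [MultilinearMap.compLinearMap_apply]
  have hfun : (fun j : Fin (2 * n) =>
      (if (j : ℕ) < n then (LinearMap.id : (L × L) →ₗ[ℝ] (L × L))
        else (LinearMap.snd ℝ L L).prod (LinearMap.fst ℝ L L)) (pairDiag d f j))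
      = ampVec d (fun p : L × L => (p.2, p.1)) f := by
    funext j
    by_cases h : (j : ℕ) < n
    · simp [pairDiag, ampVec, h]
    · simp [pairDiag, ampVec, h]
  rw [hfun]
  rfl

lemma tau_ampVec {n : ℕ} (σ σ' σrev : AlternatingMap ℝ L ℝ (Fin n))
    (hσrev : ∀ v : Fin n → L, σrev v = σ (fun k => v k.rev))
    (τ : AlternatingMap ℝ (L × L) ℝ (Fin (2 * n)))
    (hτ : ∀ v : Fin (2 * n) → L × L,
      τ v = (Nat.factorial (2 * n) : ℝ)⁻¹ * ∑ π : Equiv.Perm (Fin (2 * n)),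
        ((Equiv.Perm.sign π : ℤ) : ℝ) *
          (σrev (fun k : Fin n => (v (π (Fin.cast (by ring) (Fin.castAdd n k)))).1) *
            σ' (fun k : Fin n => (v (π (Fin.cast (by ring) (Fin.natAdd n k)))).2)))
    {ι : Type*} [Fintype ι] (b : Module.Basis ι ℝ L) (f : Fin n → ι ⊕ ι) :
    τ (ampVec (⇑(b.prod b)) (fun p : L × L => (p.2, p.1)) f)
      = ((Nat.factorial (2 * n) : ℝ))⁻¹ *
        (((Nat.factorial n : ℝ) * (Nat.factorial n : ℝ)) *
          ((-1 : ℝ) ^ ((Finset.univ.filter fun k => (f k).isRight).card) *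
            (σ (fun k => b (Sum.elim id id (f k))) *
              σ' (fun k => b (Sum.elim id id (f k)))))) := by
  classical
  set S : Finset (Fin n) := Finset.univ.filter (fun k => (f k).isRight) with hS
  set w : Fin (2 * n) → L × L :=
    ampVec (⇑(b.prod b)) (fun p : L × L => (p.2, p.1)) f with hw
  have hmemS : ∀ k : Fin n, k ∈ S ↔ (f k).isRight := by
    intro k; rw [hS]; simp
  have hwlow : ∀ k : Fin n, w (lowI k) = (b.prod b) (f k) := by
    intro k
    exact ampVec_low _ _ f (lowI k) k k.isLt rfl
  have hwhigh : ∀ k : Fin n,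
      w (rv (lowI k)) = (((b.prod b) (f k)).2, ((b.prod b) (f k)).1) := by
    intro k
    have hk := k.isLt
    have hv : ((rv (lowI k) : Fin (2 * n)) : ℕ) = 2 * n - 1 - (k : ℕ) := rfl
    exact ampVec_high _ _ f (rv (lowI k)) k (by rw [hv]; omega) (by rw [hv]; omega)
  have hW1a : ∀ k : Fin n, (w (flipSet S (lowI k))).1 = b (Sum.elim id id (f k)) := by
    intro k
    rw [flipSet_apply, pairOf_lowI]
    cases hfk : f k with
    | inl i =>
      rw [if_neg (by rw [hmemS, hfk]; simp), hwlow, hfk]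
      simp
    | inr i =>
      rw [if_pos (by rw [hmemS, hfk]; simp), hwhigh, hfk]
      simp
  have hW1b : ∀ k : Fin n,
      (w (flipSet S (rv (lowI k)))).2 = b (Sum.elim id id (f k)) := by
    intro k
    rw [flipSet_apply, pairOf_rvlow]
    cases hfk : f k with
    | inl i =>
      rw [if_neg (by rw [hmemS, hfk]; simp), hwhigh, hfk]
      simp
    | inr i =>
      rw [if_pos (by rw [hmemS, hfk]; simp), rv_rv, hwlow, hfk]
      simp
  have hW2a : ∀ j, j ≠ flipSet S (lowI (pairOf j)) → (w j).1 = 0 := by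
    intro j hj
    rcases lowI_or j with hcase | hcase
    · cases hfk : f (pairOf j) with
      | inl i =>
        exfalso
        apply hj
        rw [flipSet_apply, pairOf_lowI, if_neg (by rw [hmemS, hfk]; simp)]
        exact hcase
      | inr i =>
        rw [hcase, hwlow, hfk]
        simp
    · cases hfk : f (pairOf j) with
      | inl i =>
        rw [hcase, hwhigh, hfk]
        simp
      | inr i =>
        exfalso
        apply hj
        rw [flipSet_apply, pairOf_lowI, if_pos (by rw [hmemS, hfk]; simp)]
        exact hcase
  have hW2b : ∀ j, j ≠ flipSet S (rv (lowI (pairOf j))) → (w j).2 = 0 := by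
    intro j hj
    rcases lowI_or j with hcase | hcase
    · cases hfk : f (pairOf j) with
      | inl i =>
        rw [hcase, hwlow, hfk]
        simp
      | inr i =>
        exfalso
        apply hj
        rw [flipSet_apply, pairOf_rvlow, if_pos (by rw [hmemS, hfk]; simp), rv_rv]
        exact hcase
    · cases hfk : f (pairOf j) with
      | inl i =>
        exfalso
        apply hj
        rw [flipSet_apply, pairOf_rvlow, if_neg (by rw [hmemS, hfk]; simp)]
        exact hcase
      | inr i =>
        rw [hcase, hwhigh, hfk]
        simp
  have hcast1 : ∀ (h : n + n = 2 * n) (k : Fin n),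
      Fin.cast h (Fin.castAdd n k) = lowI k := fun h k => Fin.ext (by simp [lowI])
  have hcast2 : ∀ (h : n + n = 2 * n) (k : Fin n),
      Fin.cast h (Fin.natAdd n k) = upI k := fun h k => Fin.ext (by simp [upI]; omega)
  rw [hτ w]
  simp only [hcast1, hcast2]
  have hvanish : ∀ π ∈ (Finset.univ : Finset (Equiv.Perm (Fin (2 * n)))),
      π ∉ Finset.image
        (fun ab : Equiv.Perm (Fin n) × Equiv.Perm (Fin n) => JP S ab.1 ab.2)
        Finset.univ →
      ((Equiv.Perm.sign π : ℤ) : ℝ) *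
        (σrev (fun k => (w (π (lowI k))).1) * σ' (fun k => (w (π (upI k))).2)) = 0 := by
    intro π _ hπ
    by_contra hne
    apply hπ
    have hσr : σrev (fun k => (w (π (lowI k))).1) ≠ 0 := by
      intro h0; apply hne; rw [h0]; ring
    have hσ2 : σ' (fun k => (w (π (upI k))).2) ≠ 0 := by
      intro h0; apply hne; rw [h0]; ring
    have hgood : ∀ k, π (lowI k) = flipSet S (lowI (pairOf (π (lowI k)))) := by
      intro k
      by_contra hc
      exact hσr (AlternatingMap.map_coord_zero σrev k (hW2a _ hc))
    have hgoodU : ∀ k, π (upI k) = flipSet S (rv (lowI (pairOf (π (upI k))))) := by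
      intro k
      by_contra hc
      exact hσ2 (AlternatingMap.map_coord_zero σ' k (hW2b _ hc))
    have hαinj : Function.Injective (fun k => pairOf (π (lowI k))) := by
      intro k1 k2 he
      simp only at he
      have h1 : π (lowI k1) = π (lowI k2) := by rw [hgood k1, hgood k2, he]
      exact lowI_injective (π.injective h1)
    have hβinj : Function.Injective (fun k => pairOf (π (upI k))) := by
      intro k1 k2 he
      simp only at he
      have h1 : π (upI k1) = π (upI k2) := by rw [hgoodU k1, hgoodU k2, he]
      exact upI_injective (π.injective h1)
    refine Finset.mem_image.mpr
      ⟨(Equiv.ofBijective _ ((Fintype.bijective_iff_injective_and_card _).mpr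
          ⟨hαinj, rfl⟩),
        Equiv.ofBijective _ ((Fintype.bijective_iff_injective_and_card _).mpr
          ⟨hβinj, rfl⟩)),
        Finset.mem_univ _, ?_⟩
    apply Equiv.ext
    intro j
    by_cases hjn : (j : ℕ) < n
    · have hj : j = lowI ⟨(j : ℕ), hjn⟩ := Fin.ext rfl
      rw [hj, JP_low]
      exact (hgood _).symm
    · have hj : j = upI ⟨(j : ℕ) - n, by have := j.isLt; omega⟩ :=
        Fin.ext (by simp [upI]; omega)
      rw [hj, JP_up]
      exact (hgoodU _).symm
  have hsum : (∑ π : Equiv.Perm (Fin (2 * n)),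
        ((Equiv.Perm.sign π : ℤ) : ℝ) *
          (σrev (fun k => (w (π (lowI k))).1) * σ' (fun k => (w (π (upI k))).2)))
      = ∑ ab : Equiv.Perm (Fin n) × Equiv.Perm (Fin n),
          ((Equiv.Perm.sign (JP S ab.1 ab.2) : ℤ) : ℝ) *
            (σrev (fun k => (w (JP S ab.1 ab.2 (lowI k))).1) *
              σ' (fun k => (w (JP S ab.1 ab.2 (upI k))).2)) := by
    rw [← Finset.sum_subset (Finset.subset_univ _) hvanish]
    rw [Finset.sum_image (fun a _ a' _ h => JP_injective S h)]
  have hterm : ∀ (α β : Equiv.Perm (Fin n)),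
      ((Equiv.Perm.sign (JP S α β) : ℤ) : ℝ) *
        (σrev (fun k => (w (JP S α β (lowI k))).1) *
          σ' (fun k => (w (JP S α β (upI k))).2))
      = (-1 : ℝ) ^ S.card *
          (σ (fun k => b (Sum.elim id id (f k))) *
            σ' (fun k => b (Sum.elim id id (f k)))) := by
    intro α β
    have hXa : (fun k => (w (JP S α β (lowI k))).1)
        = fun k => b (Sum.elim id id (f (α k))) :=
      funext fun k => by rw [JP_low]; exact hW1a (α k)
    have hYb : (fun k => (w (JP S α β (upI k))).2)
        = fun k => b (Sum.elim id id (f (β k))) :=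
      funext fun k => by rw [JP_up]; exact hW1b (β k)
    rw [hXa, hYb, hσrev]
    set ρ : Equiv.Perm (Fin n) := α * Fin.revPerm with hρ
    have hcompα : (fun k : Fin n => b (Sum.elim id id (f (α k.rev))))
        = (fun k => b (Sum.elim id id (f k))) ∘ ⇑ρ :=
      funext fun k => by
        simp [hρ, Equiv.Perm.mul_apply, Fin.revPerm_apply]
    have hcompβ : (fun k : Fin n => b (Sum.elim id id (f (β k))))
        = (fun k => b (Sum.elim id id (f k))) ∘ ⇑β := rfl
    rw [hcompα, AlternatingMap.map_perm, hcompβ, AlternatingMap.map_perm,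
      sign_JP, hρ, Equiv.Perm.sign_mul]
    rcases Int.units_eq_one_or (Equiv.Perm.sign α) with hA | hA <;>
      rcases Int.units_eq_one_or (Equiv.Perm.sign β) with hB | hB <;>
      rcases Int.units_eq_one_or
        (Equiv.Perm.sign (Fin.revPerm : Equiv.Perm (Fin n))) with hR | hR <;>
      simp only [hA, hB, hR, one_mul, mul_one, mul_neg, neg_mul, neg_neg,
        Units.val_mul, Units.val_pow_eq_pow_val, Units.val_neg, Units.val_one,
        Int.cast_mul, Int.cast_pow, Int.cast_neg, Int.cast_one, one_smul,
        Units.neg_smul, smul_neg, neg_smul] <;>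
      simp only [smul_eq_mul] <;> ring
  rw [hsum, Finset.sum_congr rfl (fun ab _ => hterm ab.1 ab.2),
    Finset.sum_const, Finset.card_univ, Fintype.card_prod, Fintype.card_perm,
    Fintype.card_fin, nsmul_eq_mul]
  push_cast
  ring

end TauComp


/-- Axiom R3x, the slice region reproduces the Fock pairing: For
`V = L × L` with form `G((x,y),(x',y')) = −g(x,x') + g(y,y')` and the swap map
`u(x,y) = (y,x)`, the amplitude of the antisymmetrized product of `σ_rev` and `σ'`
equals the Fock pairing: `A_{G,u}(τ*(σ_rev ⊗ σ')) = g_n(σ, σ')`. -/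
theorem stmt15 {L : Type*} [AddCommGroup L] [Module ℝ L] [FiniteDimensional ℝ L]
    (g : L →ₗ[ℝ] L →ₗ[ℝ] ℝ)
    (hsymm : ∀ x y, g x y = g y x)
    (hnondeg : ∀ x, (∀ y, g x y = 0) → x = 0)
    (G : L × L → L × L → ℝ)
    (hG : ∀ v w, G v w = -(g v.1 w.1) + g v.2 w.2)
    {n : ℕ} (σ σ' σrev : AlternatingMap ℝ L ℝ (Fin n))
    (hσrev : ∀ v : Fin n → L, σrev v = σ (fun k => v k.rev))
    (τ : AlternatingMap ℝ (L × L) ℝ (Fin (2 * n)))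
    (hτ : ∀ v : Fin (2 * n) → L × L,
      τ v = (Nat.factorial (2 * n) : ℝ)⁻¹ * ∑ π : Equiv.Perm (Fin (2 * n)),
        ((Equiv.Perm.sign π : ℤ) : ℝ) *
          (σrev (fun k : Fin n => (v (π (Fin.cast (by ring) (Fin.castAdd n k)))).1) *
            σ' (fun k : Fin n => (v (π (Fin.cast (by ring) (Fin.natAdd n k)))).2)))
    {ι κ : Type*} [Fintype ι] [Fintype κ]
    (b : Module.Basis ι ℝ L) (hb : IsONBasis (fun x y => g x y) b)
    (c : Module.Basis κ ℝ (L × L)) (hc : IsONBasis G c) :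
    amp G (fun p => (p.2, p.1)) c τ = fockPair (fun x y => g x y) b σ σ' := by
  classical
  obtain ⟨hb0, hb1⟩ := hb
  obtain ⟨hcON0, hcON1⟩ := hc
  set Gb : (L × L) →ₗ[ℝ] (L × L) →ₗ[ℝ] ℝ := LinearMap.mk₂ ℝ
    (fun v w => -(g v.1 w.1) + g v.2 w.2)
    (fun m₁ m₂ w => by
      simp only [Prod.fst_add, Prod.snd_add, map_add, LinearMap.add_apply]
      ring)
    (fun r m w => by
      simp only [Prod.smul_fst, Prod.smul_snd, map_smul, LinearMap.smul_apply,
        smul_eq_mul]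
      ring)
    (fun m w₁ w₂ => by
      simp only [Prod.fst_add, Prod.snd_add, map_add]
      ring)
    (fun r m w => by
      simp only [Prod.smul_fst, Prod.smul_snd, map_smul, smul_eq_mul]
      ring) with hGbdef
  have hGb : ∀ v w : L × L, G v w = Gb v w := by
    intro v w
    rw [hG v w, hGbdef, LinearMap.mk₂_apply]
  have hGbs : ∀ v w : L × L, Gb v w = Gb w v := by
    intro v w
    rw [hGbdef, LinearMap.mk₂_apply, LinearMap.mk₂_apply,
      hsymm v.1 w.1, hsymm v.2 w.2]
  have hc0' : ∀ i j, i ≠ j → Gb (c i) (c j) = 0 := fun i j h => by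
    rw [← hGb]; exact hcON0 i j h
  have hc1' : ∀ i, Gb (c i) (c i) = 1 ∨ Gb (c i) (c i) = -1 := fun i => by
    rw [← hGb]; exact hcON1 i
  have hbb0 : ∀ z z', z ≠ z' → Gb ((b.prod b) z) ((b.prod b) z') = 0 := by
    rintro (i | i) (j | j) hne
    · have hij : i ≠ j := fun h => hne (by rw [h])
      simp [hGbdef, LinearMap.mk₂_apply, hb0 i j hij]
    · simp [hGbdef, LinearMap.mk₂_apply]
    · simp [hGbdef, LinearMap.mk₂_apply]
    · have hij : i ≠ j := fun h => hne (by rw [h])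
      simp [hGbdef, LinearMap.mk₂_apply, hb0 i j hij]
  have hbb1 : ∀ z, Gb ((b.prod b) z) ((b.prod b) z) = 1
      ∨ Gb ((b.prod b) z) ((b.prod b) z) = -1 := by
    rintro (i | i)
    · rcases hb1 i with h | h
      · right; simp [hGbdef, LinearMap.mk₂_apply, h]
      · left; simp [hGbdef, LinearMap.mk₂_apply, h]
    · rcases hb1 i with h | h
      · left; simp [hGbdef, LinearMap.mk₂_apply, h]
      · right; simp [hGbdef, LinearMap.mk₂_apply, h]
  set M : MultilinearMap ℝ (fun _ : Fin (2 * n) => L × L) ℝ :=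
    τ.toMultilinearMap.compLinearMap (fun j : Fin (2 * n) =>
      if (j : ℕ) < n then (LinearMap.id : (L × L) →ₗ[ℝ] (L × L))
      else (LinearMap.snd ℝ L L).prod (LinearMap.fst ℝ L L)) with hMdef
  have hmaster := master Gb hGbs c hc0' hc1' (b.prod b) hbb0 hbb1 n M
  have hA : ∑ f : Fin n → κ, (∏ k, G (c (f k)) (c (f k))) *
        τ (ampVec (⇑c) (fun p => (p.2, p.1)) f)
      = ∑ f : Fin n → κ, (∏ k, Gb (c (f k)) (c (f k))) • M (pairDiag (⇑c) f) := by
    refine Finset.sum_congr rfl fun f _ => ?_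
    rw [hMdef, M_pairDiag τ (⇑c) f, smul_eq_mul]
    congr 1
    exact Finset.prod_congr rfl fun k _ => hGb _ _
  have hprodbb : ∀ f : Fin n → ι ⊕ ι, (∏ k, Gb ((b.prod b) (f k)) ((b.prod b) (f k)))
      = (-1 : ℝ) ^ ((Finset.univ.filter fun k => (f k).isLeft).card) *
        ∏ k, g (b (Sum.elim id id (f k))) (b (Sum.elim id id (f k))) := by
    intro f
    have h1 : ∀ k : Fin n, Gb ((b.prod b) (f k)) ((b.prod b) (f k))
        = (if (f k).isLeft then (-1 : ℝ) else 1) *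
            g (b (Sum.elim id id (f k))) (b (Sum.elim id id (f k))) := by
      intro k
      cases hfk : f k with
      | inl i => simp [hGbdef, LinearMap.mk₂_apply]
      | inr i => simp [hGbdef, LinearMap.mk₂_apply]
    rw [Finset.prod_congr rfl fun k _ => h1 k, Finset.prod_mul_distrib]
    congr 1
    rw [Finset.prod_ite, Finset.prod_const, Finset.prod_const, one_pow, mul_one]
  have hcards : ∀ f : Fin n → ι ⊕ ι,
      ((Finset.univ.filter fun k => (f k).isLeft).card
        + (Finset.univ.filter fun k => (f k).isRight).card) = n := by
    intro f
    have h2 : (Finset.univ.filter fun k => (f k).isRight)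
        = (Finset.univ.filter fun k : Fin n => ¬ ((f k).isLeft = true)) := by
      apply Finset.filter_congr
      intro k _
      cases f k <;> simp
    rw [h2, Finset.card_filter_add_card_filter_not, Finset.card_univ,
      Fintype.card_fin]
  have hB : ∀ f : Fin n → ι ⊕ ι,
      (∏ k, Gb ((b.prod b) (f k)) ((b.prod b) (f k))) • M (pairDiag (⇑(b.prod b)) f)
      = ((Nat.factorial (2 * n) : ℝ))⁻¹ *
          (((Nat.factorial n : ℝ) * (Nat.factorial n : ℝ)) *
            ((-1 : ℝ) ^ n *
              ((∏ k, g (b (Sum.elim id id (f k))) (b (Sum.elim id id (f k)))) *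
                (σ (fun k => b (Sum.elim id id (f k))) *
                  σ' (fun k => b (Sum.elim id id (f k))))))) := by
    intro f
    rw [smul_eq_mul, hprodbb f, hMdef, M_pairDiag τ (⇑(b.prod b)) f,
      tau_ampVec σ σ' σrev hσrev τ hτ b f]
    have hps : (-1 : ℝ) ^ ((Finset.univ.filter fun k => (f k).isLeft).card) *
        (-1 : ℝ) ^ ((Finset.univ.filter fun k => (f k).isRight).card)
        = (-1 : ℝ) ^ n := by
      rw [← pow_add, hcards f]
    rw [← hps]
    ring
  have hfactor : (∑ f : Fin n → ι ⊕ ι,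
        (∏ k, g (b (Sum.elim id id (f k))) (b (Sum.elim id id (f k)))) *
          (σ (fun k => b (Sum.elim id id (f k))) *
            σ' (fun k => b (Sum.elim id id (f k)))))
      = (2 : ℝ) ^ n * ∑ tt : Fin n → ι,
          (∏ k, g (b (tt k)) (b (tt k))) *
            (σ (fun k => b (tt k)) * σ' (fun k => b (tt k))) := by
    have heq := Fintype.sum_equiv
      ({ toFun := fun f => (fun k => (f k).isLeft, fun k => Sum.elim id id (f k))
         invFun := fun p k => if p.1 k then Sum.inl (p.2 k) else Sum.inr (p.2 k)
         left_inv := by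
           intro f
           funext k
           cases hfk : f k <;> simp [hfk]
         right_inv := by
           rintro ⟨sbool, tf⟩
           simp only [Prod.mk.injEq]
           constructor <;> funext k <;> cases hsk : sbool k <;> simp [hsk] } :
        (Fin n → ι ⊕ ι) ≃ ((Fin n → Bool) × (Fin n → ι)))
      (fun f : Fin n → ι ⊕ ι =>
        (∏ k, g (b (Sum.elim id id (f k))) (b (Sum.elim id id (f k)))) *
          (σ (fun k => b (Sum.elim id id (f k))) *
            σ' (fun k => b (Sum.elim id id (f k)))))
      (fun p : (Fin n → Bool) × (Fin n → ι) =>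
        (∏ k, g (b (p.2 k)) (b (p.2 k))) *
          (σ (fun k => b (p.2 k)) * σ' (fun k => b (p.2 k))))
      (fun f => rfl)
    rw [heq]
    rw [Fintype.sum_prod_type]
    dsimp only
    rw [Finset.sum_const, Finset.card_univ, nsmul_eq_mul]
    congr 1
    rw [Fintype.card_fun]
    push_cast
    simp
  have h2n : ((2 * n).factorial : ℝ) ≠ 0 :=
    Nat.cast_ne_zero.mpr (Nat.factorial_ne_zero _)
  have hnf : ((n.factorial : ℝ)) ≠ 0 :=
    Nat.cast_ne_zero.mpr (Nat.factorial_ne_zero _)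
  have h2 : (2 : ℝ) ^ n ≠ 0 := pow_ne_zero _ two_ne_zero
  have hm1 : (-1 : ℝ) ^ n * (-1 : ℝ) ^ n = 1 := by
    rw [← pow_add]
    exact Even.neg_one_pow ⟨n, by ring⟩
  have key : ∀ T : ℝ,
      ((2 * n).factorial : ℝ) / (2 ^ n * (n.factorial : ℝ)) * (-1 : ℝ) ^ n *
        (((2 * n).factorial : ℝ)⁻¹ *
          (((n.factorial : ℝ) * (n.factorial : ℝ)) *
            ((-1 : ℝ) ^ n * ((2 : ℝ) ^ n * T))))
      = (n.factorial : ℝ) * T := by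
    intro T
    rw [div_eq_mul_inv, mul_inv]
    calc ((2 * n).factorial : ℝ) * (((2 : ℝ) ^ n)⁻¹ * ((n.factorial : ℝ))⁻¹) *
          (-1 : ℝ) ^ n *
          (((2 * n).factorial : ℝ)⁻¹ *
            (((n.factorial : ℝ) * (n.factorial : ℝ)) *
              ((-1 : ℝ) ^ n * ((2 : ℝ) ^ n * T))))
        = (((2 * n).factorial : ℝ) * ((2 * n).factorial : ℝ)⁻¹) *
            ((2 : ℝ) ^ n * ((2 : ℝ) ^ n)⁻¹) *
            ((((n.factorial : ℝ))⁻¹ * (n.factorial : ℝ)) * (n.factorial : ℝ)) *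
            ((-1 : ℝ) ^ n * (-1 : ℝ) ^ n) * T := by ring
      _ = (n.factorial : ℝ) * T := by
          rw [mul_inv_cancel₀ h2n, mul_inv_cancel₀ h2, inv_mul_cancel₀ hnf, hm1]
          ring
  unfold amp fockPair
  rw [hA, hmaster, Finset.sum_congr rfl fun f _ => hB f,
    ← Finset.mul_sum, ← Finset.mul_sum, ← Finset.mul_sum, hfactor]
  exact key _
end
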